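/- arXiv:2403.15058 — 9 statements merged into one kernel-verified Lean document; each statement's English description precedes it below -/
import Mathlib

section
/- For all positive integers n and k with 1 ≤ k ≤ n+1, the Narayana numbers N(n,k) = (1/n)·C(n,k)·C(n,k-1) satisfy the recurrence (n+2)·N(n+1,k) = (n+2k)·N(n,k) + (3n+4-2k)·N(n,k-1). -/
/-- Narayana number `N(n,k) = (1/n) C(n,k) C(n,k-1)` for `1 ≤ k ≤ n`, else `0`. -/
noncomputable def narayana (n k : ℕ) : ℚ :=
  if 1 ≤ k ∧ k ≤ n then (n.choose k * n.choose (k - 1) : ℚ) / n else 0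

theorem narayana_recurrence (n k : ℕ) (hn : 1 ≤ n) (hk1 : 1 ≤ k) (hk2 : k ≤ n + 1) :
    ((n : ℚ) + 2) * narayana (n + 1) k =
      ((n : ℚ) + 2 * k) * narayana n k +
        ((3 * n + 4 : ℚ) - 2 * k) * narayana n (k - 1) := by
  have hn0 : (n : ℚ) ≠ 0 := by positivity
  have hn1 : ((n : ℚ) + 1) ≠ 0 := by positivity
  rcases eq_or_lt_of_le hk2 with hke | hklt
  · -- k = n + 1
    obtain ⟨m, rfl⟩ : ∃ m, n = m + 1 := ⟨n - 1, by omega⟩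
    subst hke
    simp only [narayana]
    rw [if_pos (by omega), if_neg (by omega), if_pos (by omega)]
    simp only [Nat.add_sub_cancel, Nat.choose_self, Nat.choose_succ_self_right]
    push_cast
    field_simp
    ring
  · have hkn : k ≤ n := by omega
    rcases eq_or_lt_of_le hk1 with hke | hk2' -- k = 1 or k ≥ 2
    · subst hke
      simp only [narayana]
      rw [if_pos (by omega), if_pos (by omega), if_neg (by omega)]
      simp only [Nat.sub_self, Nat.choose_zero_right, Nat.choose_one_right]
      push_cast
      field_simp
      ring
    · obtain ⟨j, rfl⟩ : ∃ j, k = j + 2 := ⟨k - 2, by omega⟩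
      have hjn : j + 2 ≤ n := hkn
      simp only [narayana]
      rw [if_pos (by omega), if_pos (by omega), if_pos (by omega)]
      norm_num
      have hP1 : (n + 1).choose (j + 2) = n.choose (j + 1) + n.choose (j + 2) :=
        Nat.choose_succ_succ' n (j + 1)
      have hP2 : (n + 1).choose (j + 1) = n.choose j + n.choose (j + 1) :=
        Nat.choose_succ_succ' n j
      have h1 : n.choose (j + 2) * (j + 2) = n.choose (j + 1) * (n - (j + 1)) :=
        Nat.choose_succ_right_eq n (j + 1)
      have h2 : n.choose (j + 1) * (j + 1) = n.choose j * (n - j) :=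
        Nat.choose_succ_right_eq n j
      have h1' : (n.choose (j + 2) : ℚ) * (j + 2) =
          (n.choose (j + 1) : ℚ) * ((n : ℚ) - (j + 1)) := by
        have := congrArg (fun x : ℕ => (x : ℚ)) h1
        push_cast [Nat.cast_sub (by omega : j + 1 ≤ n)] at this
        linarith [this]
      have h2' : (n.choose (j + 1) : ℚ) * (j + 1) =
          (n.choose j : ℚ) * ((n : ℚ) - j) := by
        have := congrArg (fun x : ℕ => (x : ℚ)) h2
        push_cast [Nat.cast_sub (by omega : j ≤ n)] at this
        linarith [this]
      have hj2 : ((j : ℚ) + 2) ≠ 0 := by positivity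
      have hnj : ((n : ℚ) - j) ≠ 0 := by
        have : (j : ℚ) + 2 ≤ n := by exact_mod_cast hjn
        intro h; nlinarith
      have hC : (n.choose (j + 2) : ℚ) =
          (n.choose (j + 1) : ℚ) * ((n : ℚ) - (j + 1)) / ((j : ℚ) + 2) := by
        field_simp
        linarith [h1']
      have hA : (n.choose j : ℚ) =
          (n.choose (j + 1) : ℚ) * ((j : ℚ) + 1) / ((n : ℚ) - j) := by
        field_simp
        linarith [h2']
      rw [hP1, hP2]
      push_cast
      rw [hC, hA]
      field_simp
      ring
end

section
/- For every positive integer n, the Narayana polynomial of type A satisfies the differential recurrence (n+2)·N^A_{n+1}(x) = ((3n+2)x + n)·N^A_n(x) + 2(x - x²)·(N^A_n)'(x). -/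
open Polynomial

open Nat

/-- The Narayana polynomial of type A: `N^A_n(x) = ∑_{k=1}^n (1/n) C(n,k) C(n,k-1) x^k`
for `n ≥ 1`, and `N^A_0(x) = 1`. -/
noncomputable def narayanaA (n : ℕ) : Polynomial ℚ :=
  if n = 0 then 1
  else ∑ k ∈ Finset.Icc 1 n, C ((n.choose k * n.choose (k - 1) : ℚ) / n) * X ^ k

lemma coeff_narayanaA (n : ℕ) (hn : 1 ≤ n) (m : ℕ) :
    (narayanaA n).coeff m =
      if 1 ≤ m ∧ m ≤ n then (n.choose m * n.choose (m - 1) : ℚ) / n else 0 := by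
  rw [narayanaA, if_neg (by omega), finset_sum_coeff]
  simp only [coeff_C_mul, coeff_X_pow, mul_ite, mul_one, mul_zero]
  rw [Finset.sum_ite_eq (Finset.Icc 1 n) m]
  simp [Finset.mem_Icc]

theorem narayanaA_diff_recurrence (n : ℕ) (hn : 1 ≤ n) :
    C ((n : ℚ) + 2) * narayanaA (n + 1) =
      (C ((3 * n + 2 : ℚ)) * X + C (n : ℚ)) * narayanaA n +
        C 2 * (X - X ^ 2) * derivative (narayanaA n) := by
  rw [show (C ((3 * n + 2 : ℚ)) * X + C (n : ℚ)) * narayanaA n +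
        C 2 * (X - X ^ 2) * derivative (narayanaA n) =
      C ((3 * n + 2 : ℚ)) * narayanaA n * X ^ 1 + C (n : ℚ) * narayanaA n +
        (C 2 * derivative (narayanaA n)) * X ^ 1 -
        (C 2 * derivative (narayanaA n)) * X ^ 2 from by ring]
  ext m
  simp only [coeff_C_mul, coeff_add, coeff_sub, coeff_mul_X_pow', coeff_derivative,
    coeff_narayanaA n hn, coeff_narayanaA (n+1) (by omega)]
  rcases m with _ | m
  · norm_num
  rcases m with _ | k
  · norm_num
    rw [if_pos hn]
    have h0 : (n:ℚ) ≠ 0 := Nat.cast_ne_zero.mpr (by omega)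
    have h1 : (n:ℚ) + 1 ≠ 0 := by positivity
    field_simp
    rw [if_pos hn]
  · norm_num
    simp only [show k + 1 + 1 - 2 + 1 = k + 1 from rfl, show k + 1 + 1 - 2 = k from rfl]
    rcases lt_trichotomy (k+1) n with h | h | h
    · rw [if_pos (by omega : k < n), if_pos (by omega : k < n),
        if_pos (by omega : k+1 < n), if_pos (by omega : k+1 < n),
        if_pos (by omega : k < n)]
      obtain ⟨d, rfl⟩ : ∃ d, n = k + 2 + d := ⟨n - (k+2), by omega⟩
      have c1 : ((k+2+d).choose (k+1+1) : ℚ) = (k+2+d)! / ((k+2)! * d !) := by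
        rw [Nat.cast_choose ℚ (by omega), show k+2+d-(k+1+1) = d from by omega]
      have c2 : ((k+2+d).choose (k+1) : ℚ) = (k+2+d)! / ((k+1)! * (d+1)!) := by
        rw [Nat.cast_choose ℚ (by omega), show k+2+d-(k+1) = d+1 from by omega]
      have c3 : ((k+2+d).choose k : ℚ) = (k+2+d)! / (k ! * (d+2)!) := by
        rw [Nat.cast_choose ℚ (by omega), show k+2+d-k = d+2 from by omega]
      have c4 : ((k+2+d+1).choose (k+1+1) : ℚ) = (k+2+d+1)! / ((k+2)! * (d+1)!) := by
        rw [Nat.cast_choose ℚ (by omega), show k+2+d+1-(k+1+1) = d+1 from by omega]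
      have c5 : ((k+2+d+1).choose (k+1) : ℚ) = (k+2+d+1)! / ((k+1)! * (d+2)!) := by
        rw [Nat.cast_choose ℚ (by omega), show k+2+d+1-(k+1) = d+2 from by omega]
      rw [c1, c2, c3, c4, c5]
      have f1 : ((k+2+d+1)! : ℚ) = ((k:ℚ)+2+d+1) * (k+2+d)! := by
        push_cast [Nat.factorial_succ]; ring
      have f2 : ((k+2)! : ℚ) = ((k:ℚ)+2) * ((k:ℚ)+1) * k ! := by
        push_cast [Nat.factorial_succ]; ring
      have f3 : ((k+1)! : ℚ) = ((k:ℚ)+1) * k ! := by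
        push_cast [Nat.factorial_succ]; ring
      have f4 : ((d+2)! : ℚ) = ((d:ℚ)+2) * ((d:ℚ)+1) * d ! := by
        push_cast [Nat.factorial_succ]; ring
      have f5 : ((d+1)! : ℚ) = ((d:ℚ)+1) * d ! := by
        push_cast [Nat.factorial_succ]; ring
      rw [f1, f2, f3, f4, f5]
      have hk : (k ! : ℚ) ≠ 0 := Nat.cast_ne_zero.mpr k.factorial_ne_zero
      have hd : (d ! : ℚ) ≠ 0 := Nat.cast_ne_zero.mpr d.factorial_ne_zero
      have hN : ((k+2+d)! : ℚ) ≠ 0 := Nat.cast_ne_zero.mpr (k+2+d).factorial_ne_zero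
      push_cast
      have h1 : ((k:ℚ)+2+d) ≠ 0 := by positivity
      have h2 : ((k:ℚ)+2+d+1) ≠ 0 := by positivity
      have h3 : ((k:ℚ)+1) ≠ 0 := by positivity
      have h4 : ((k:ℚ)+2) ≠ 0 := by positivity
      have h5 : ((d:ℚ)+1) ≠ 0 := by positivity
      have h6 : ((d:ℚ)+2) ≠ 0 := by positivity
      field_simp
      ring
    · subst h
      rw [if_pos (by omega : k < k+1), if_pos (by omega : k < k+1), if_neg (by omega), if_neg (by omega),
        if_pos (by omega : k < k+1)]
      simp [Nat.choose_self, Nat.choose_succ_self_right]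
      have h3 : ((k:ℚ)+1) ≠ 0 := by positivity
      have h4 : ((k:ℚ)+2) ≠ 0 := by positivity
      field_simp
      ring
    · rw [if_neg (by omega), if_neg (by omega), if_neg (by omega), if_neg (by omega),
        if_neg (by omega)]
      ring
end

section
/- For all positive integers n and all k with 1 ≤ k ≤ n+1, the sum Σ_{i=1}^{k} (i/(n+1))·C(n+1,i)·C(n+1-i,k-i)·C(n+1-k,i-1) equals C(n,k-1)². -/
lemma vand_aux (m p N : ℕ) (hm : m < N) :
    ∑ j ∈ Finset.range N, m.choose j * p.choose j = (m + p).choose m := by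
  have h1 : ∑ j ∈ Finset.range N, m.choose j * p.choose j
      = ∑ j ∈ Finset.range (N + p + 1), m.choose j * p.choose j := by
    apply Finset.sum_subset (Finset.range_subset_range.2 (by omega))
    intro j _ hj
    simp only [Finset.mem_range, not_lt] at hj
    rw [Nat.choose_eq_zero_of_lt (by omega), Nat.zero_mul]
  have h2 : ∑ j ∈ Finset.range (p + 1), m.choose j * p.choose j
      = ∑ j ∈ Finset.range (N + p + 1), m.choose j * p.choose j := by
    apply Finset.sum_subset (Finset.range_subset_range.2 (by omega))
    intro j _ hj
    simp only [Finset.mem_range, not_lt] at hj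
    rw [Nat.choose_eq_zero_of_lt (n := p) (by omega), Nat.mul_zero]
  rw [h1, ← h2]
  rw [show (m + p).choose m = (m + p).choose p from Nat.choose_symm_add,
    Nat.add_choose_eq, Finset.Nat.sum_antidiagonal_eq_sum_range_succ_mk]
  refine Finset.sum_congr rfl fun a ha => ?_
  simp only [Finset.mem_range] at ha
  rw [Nat.choose_symm (by omega)]

lemma key_nat (n k : ℕ) (hk1 : 1 ≤ k) (hk2 : k ≤ n + 1) :
    ∑ j ∈ Finset.range k, n.choose j * (n - j).choose (k - 1 - j) * (n + 1 - k).choose j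
      = n.choose (k - 1) ^ 2 := by
  have hstep : ∀ j ∈ Finset.range k,
      n.choose j * (n - j).choose (k - 1 - j) * (n + 1 - k).choose j
        = n.choose (k - 1) * ((k - 1).choose j * (n + 1 - k).choose j) := by
    intro j hj
    simp only [Finset.mem_range] at hj
    have h := Nat.choose_mul (n := n) (k := k - 1) (s := j) (by omega)
    rw [← h]
    ring
  rw [Finset.sum_congr rfl hstep, ← Finset.mul_sum,
    vand_aux (k - 1) (n + 1 - k) k (by omega),
    show k - 1 + (n + 1 - k) = n by omega, sq]

theorem old_leaves_sum (n k : ℕ) (hn : 1 ≤ n) (hk1 : 1 ≤ k) (hk2 : k ≤ n + 1) :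
    ∑ i ∈ Finset.Icc 1 k,
        ((i : ℚ) / (n + 1)) * ((n + 1).choose i) * ((n + 1 - i).choose (k - i)) *
          ((n + 1 - k).choose (i - 1)) = ((n.choose (k - 1) : ℚ)) ^ 2 := by
  have hne : ((n : ℚ) + 1) ≠ 0 := by positivity
  have hIcc : (Finset.Icc 1 k) = Finset.Ico 1 (k + 1) := by rw [Finset.Ico_add_one_right_eq_Icc]
  rw [hIcc, Finset.sum_Ico_eq_sum_range]
  simp only [Nat.add_sub_cancel]
  have hterm : ∀ j ∈ Finset.range k,
      (((1 + j : ℕ) : ℚ) / (n + 1)) * ((n + 1).choose (1 + j)) *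
          ((n + 1 - (1 + j)).choose (k - (1 + j))) * ((n + 1 - k).choose (1 + j - 1))
        = ((n.choose j * (n - j).choose (k - 1 - j) * (n + 1 - k).choose j : ℕ) : ℚ) := by
    intro j hj
    simp only [Finset.mem_range] at hj
    have hc : ((1 + j : ℕ) : ℚ) * ((n + 1).choose (1 + j)) = ((n : ℚ) + 1) * (n.choose j) := by
      have hnat : (1 + j) * ((n + 1).choose (1 + j)) = (n + 1) * n.choose j := by
        rw [Nat.add_comm 1 j, Nat.add_one_mul_choose_eq, Nat.mul_comm]
      exact_mod_cast hnat
    have h1 : n + 1 - (1 + j) = n - j := by omega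
    have h2 : k - (1 + j) = k - 1 - j := by omega
    have h3 : 1 + j - 1 = j := by omega
    rw [h1, h2, h3, div_mul_eq_mul_div, hc, mul_comm ((n : ℚ) + 1), mul_div_assoc,
      div_self hne, mul_one]
    push_cast
    ring
  rw [Finset.sum_congr rfl hterm, ← Nat.cast_sum, key_nat n k hk1 hk2]
  push_cast
  ring
end

section
/- For every integer n ≥ 2, the homogeneous type A Narayana polynomials satisfy the convolution identity N^A_n(x,y) = (x+y)·N^A_{n-1}(x,y) + Σ_{k=2}^{n-1} N^A_{k-1}(x,y)·N^A_{n-k}(x,y). -/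
open MvPolynomial

/-- The homogeneous Narayana polynomial of type A:
`N^A_n(x,y) = ∑_{k=1}^n (1/n) C(n,k) C(n,k-1) x^k y^{n-k+1}` for `n ≥ 1`, `N^A_0 = y`.
Here `X 0` plays the role of `x` and `X 1` that of `y`. -/
noncomputable def narayanaA2 (n : ℕ) : MvPolynomial (Fin 2) ℚ :=
  if n = 0 then X 1
  else ∑ k ∈ Finset.Icc 1 n,
    C ((n.choose k * n.choose (k - 1) : ℚ) / n) * X 0 ^ k * X 1 ^ (n - k + 1)

/-- The Narayana number coefficients. -/
def nu (n k : ℕ) : ℚ :=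
  if n = 0 then (if k = 0 then 1 else 0)
  else if k = 0 then 0 else (n.choose k * n.choose (k - 1) : ℚ) / n

lemma nu_zero_right (n : ℕ) (hn : n ≠ 0) : nu n 0 = 0 := by simp [nu, hn]

lemma nu_eq_zero_of_gt {n k : ℕ} (h : n < k) : nu n k = 0 := by
  have hk : k ≠ 0 := by omega
  rcases Nat.eq_zero_or_pos n with rfl | hn
  · simp [nu, hk]
  · have hne : n ≠ 0 := by omega
    simp [nu, hne, hk, Nat.choose_eq_zero_of_lt h]

/-- Representation of a homogeneous polynomial in the monomial basis. -/
noncomputable def rep (c : ℕ → ℚ) (d N : ℕ) : MvPolynomial (Fin 2) ℚ :=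
  ∑ k ∈ Finset.range N, C (c k) * X 0 ^ k * X 1 ^ (d - k)

lemma rep_congr {c c' : ℕ → ℚ} {d N : ℕ} (h : ∀ k, k < N → c k = c' k) :
    rep c d N = rep c' d N :=
  Finset.sum_congr rfl fun k hk => by rw [h k (Finset.mem_range.mp hk)]

lemma rep_extend {c : ℕ → ℚ} {d N N' : ℕ} (h : N ≤ N') (h0 : ∀ k, N ≤ k → c k = 0) :
    rep c d N = rep c d N' :=
  Finset.sum_subset (Finset.range_subset_range.mpr h) (fun x _ hx => by
    rw [h0 x (le_of_not_gt fun hc => hx (Finset.mem_range.mpr hc))]; simp)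

lemma rep_smul (a : ℚ) (c : ℕ → ℚ) (d N : ℕ) :
    C a * rep c d N = rep (fun k => a * c k) d N := by
  rw [rep, rep, Finset.mul_sum]
  exact Finset.sum_congr rfl fun k _ => by rw [map_mul]; ring

lemma rep_add (c c' : ℕ → ℚ) (d N : ℕ) :
    rep c d N + rep c' d N = rep (fun k => c k + c' k) d N := by
  rw [rep, rep, rep, ← Finset.sum_add_distrib]
  exact Finset.sum_congr rfl fun k _ => by rw [map_add]; ring

lemma rep_sub (c c' : ℕ → ℚ) (d N : ℕ) :
    rep c d N - rep c' d N = rep (fun k => c k - c' k) d N := by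
  rw [rep, rep, rep, ← Finset.sum_sub_distrib]
  exact Finset.sum_congr rfl fun k _ => by rw [map_sub]; ring

lemma rep_mulX0 (c : ℕ → ℚ) (d N : ℕ) (h0 : c 0 = 0) :
    X 0 * rep c d N = rep (fun k => c (k - 1)) (d + 1) (N + 1) := by
  rw [rep, rep, Finset.mul_sum, Finset.sum_range_succ']
  have : C (c (0 - 1)) * X (0 : Fin 2) ^ 0 * X 1 ^ (d + 1 - 0) = 0 := by
    simp [h0]
  rw [this, add_zero]
  exact Finset.sum_congr rfl fun k _ => by
    have h1 : k + 1 - 1 = k := rfl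
    have h2 : d + 1 - (k + 1) = d - k := by omega
    rw [h1, h2]; ring

lemma rep_mulX1 (c : ℕ → ℚ) (d N : ℕ) (h : N ≤ d + 1) :
    X 1 * rep c d N = rep c (d + 1) N := by
  rw [rep, rep, Finset.mul_sum]
  refine Finset.sum_congr rfl fun k hk => ?_
  have hk' : k ≤ d := by have := Finset.mem_range.mp hk; omega
  have h2 : d + 1 - k = (d - k) + 1 := by omega
  rw [h2]; ring

lemma narayana_rep (n : ℕ) : narayanaA2 n = rep (nu n) (n + 1) (n + 2) := by
  rcases Nat.eq_zero_or_pos n with rfl | hn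
  · rw [narayanaA2, rep]
    simp [nu, Finset.sum_range_succ]
  · have hne : n ≠ 0 := by omega
    rw [narayanaA2, if_neg hne, rep]
    rw [show Finset.Icc 1 n = Finset.Ico 1 (n+1) from rfl]
    rw [Finset.sum_Ico_eq_sum_range]
    rw [Finset.sum_range_succ', Finset.sum_range_succ]
    have hz1 : C (nu n (n + 1)) * X (0:Fin 2) ^ (n+1) * X 1 ^ (n + 1 - (n+1)) = 0 := by
      rw [nu_eq_zero_of_gt (by omega)]; simp
    have hz0 : C (nu n 0) * X (0:Fin 2) ^ 0 * X 1 ^ (n + 1 - 0) = 0 := by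
      rw [nu_zero_right n hne]; simp
    rw [hz1, hz0, add_zero, add_zero]
    refine Finset.sum_congr rfl fun k hk => ?_
    have hk' : k < n := by simpa using Finset.mem_range.mp hk
    have h1 : nu n (k + 1) = ((n.choose (k+1) * n.choose (k + 1 - 1) : ℚ) / n) := by
      simp [nu, hne]
    rw [show 1 + k = k + 1 by omega, h1]
    have h2 : n - (k + 1) + 1 = n + 1 - (k + 1) := by omega
    rw [h2]

lemma narayana_zero : narayanaA2 0 = X 1 := by simp [narayanaA2]

lemma narayana_one : narayanaA2 1 = X 0 * X 1 := by
  rw [narayanaA2, if_neg (by norm_num), show Finset.Icc 1 1 = {1} from rfl,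
    Finset.sum_singleton]
  norm_num

lemma narayana_two : narayanaA2 2 = X 0 * X 1 ^ 2 + X 0 ^ 2 * X 1 := by
  rw [narayanaA2, if_neg (by norm_num), show Finset.Icc 1 2 = {1, 2} from rfl,
    Finset.sum_insert (by decide), Finset.sum_singleton]
  norm_num
lemma cast_csr (m k : ℕ) :
    (m.choose (k + 1) : ℚ) * (k + 1) = m.choose k * ((m : ℚ) - k) := by
  rcases le_or_gt k m with h | h
  · have h2 : ((m.choose (k + 1) * (k + 1) : ℕ) : ℚ) = ((m.choose k * (m - k) : ℕ) : ℚ) := by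
      rw [Nat.choose_succ_right_eq]
    push_cast [Nat.cast_sub h] at h2
    linarith [h2]
  · rw [Nat.choose_eq_zero_of_lt h, Nat.choose_eq_zero_of_lt (by omega)]
    push_cast; ring

lemma key (n j a b d e : ℚ) (r1 : a * (j - 2) = e * (n - j + 1))
    (r2 : b * (j - 1) = a * (n - j)) (r3 : d * j = b * (n - j - 1)) :
    (n + 1) * (n - 1) * ((a + 2*b + d) * (e + 2*a + b))
      = n * (2*n - 1) * ((a + b) * (e + a) + (b + d) * (a + b))
        - n * (n - 1) * (a*e - 2*a*b + b*d) := by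
  linear_combination (a + (2 - n)*b + (1 - n)*d) * r1 + (-a + b + d - e) * r2
    + ((n - 2)*a - b + (n - 1)*e) * r3

lemma nu_prec (p k : ℕ) :
    ((p:ℚ) + 4) * nu (p+3) k
      = (2*(p:ℚ) + 5) * (nu (p+2) (k-1) + nu (p+2) k)
        - ((p:ℚ) + 1) * (nu (p+1) (k-2) - 2 * nu (p+1) (k-1) + nu (p+1) k) := by
  have h3 : ((p:ℚ) + 3) ≠ 0 := by positivity
  have h2 : ((p:ℚ) + 2) ≠ 0 := by positivity
  have h1 : ((p:ℚ) + 1) ≠ 0 := by positivity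
  match k with
  | 0 => simp [nu]
  | 1 =>
    simp only [nu, show (1:ℕ)-1 = 0 from rfl, show (1:ℕ)-2 = 0 from rfl]
    norm_num [Nat.choose_one_right]
    field_simp
    ring
  | 2 =>
    simp only [nu, show (2:ℕ)-1 = 1 from rfl, show (2:ℕ)-2 = 0 from rfl]
    norm_num [Nat.choose_one_right, Nat.cast_choose_two]
    field_simp
    ring
  | (q+3) =>
    simp only [nu, show q+3-1 = q+2 from rfl, show q+3-2 = q+1 from rfl,
      show q+2-1 = q+1 from rfl, show q+1-1 = q from rfl]
    norm_num
    set a : ℚ := ((p+1).choose (q+1) : ℚ) with ha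
    set b : ℚ := ((p+1).choose (q+2) : ℚ) with hb
    set d : ℚ := ((p+1).choose (q+3) : ℚ) with hd
    set e : ℚ := ((p+1).choose q : ℚ) with he
    have hA : ((p+3).choose (q+3) : ℚ) = a + 2*b + d := by
      rw [show p+3 = (p+2)+1 by omega, show q+3 = (q+2)+1 by omega,
        Nat.choose_succ_succ (p+2) (q+2),
        show p+2 = (p+1)+1 by omega, show q+2 = (q+1)+1 by omega,
        Nat.choose_succ_succ (p+1) (q+1), Nat.choose_succ_succ (p+1) (q+2)]
      push_cast; ring
    have hB : ((p+3).choose (q+2) : ℚ) = e + 2*a + b := by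
      rw [show p+3 = (p+2)+1 by omega, show q+2 = (q+1)+1 by omega,
        Nat.choose_succ_succ (p+2) (q+1),
        show p+2 = (p+1)+1 by omega, show q+1 = q+1 from rfl,
        Nat.choose_succ_succ (p+1) q, Nat.choose_succ_succ (p+1) (q+1)]
      push_cast; ring
    have hC : ((p+2).choose (q+2) : ℚ) = a + b := by
      rw [show p+2 = (p+1)+1 by omega, show q+2 = (q+1)+1 by omega,
        Nat.choose_succ_succ (p+1) (q+1)]
      push_cast; ring
    have hD : ((p+2).choose (q+1) : ℚ) = e + a := by
      rw [show p+2 = (p+1)+1 by omega, Nat.choose_succ_succ (p+1) q]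
      push_cast; ring
    have hE : ((p+2).choose (q+3) : ℚ) = b + d := by
      rw [show p+2 = (p+1)+1 by omega, show q+3 = (q+2)+1 by omega,
        Nat.choose_succ_succ (p+1) (q+2)]
      push_cast; ring
    rw [hA, hB, hC, hD, hE]
    have r1 : a * (((q:ℚ)+3) - 2) = e * ((((p:ℚ)+3) - ((q:ℚ)+3)) + 1) := by
      have := cast_csr (p+1) q
      push_cast at this ⊢
      linear_combination this
    have r2 : b * (((q:ℚ)+3) - 1) = a * (((p:ℚ)+3) - ((q:ℚ)+3)) := by
      have := cast_csr (p+1) (q+1)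
      push_cast at this ⊢
      linear_combination this
    have r3 : d * ((q:ℚ)+3) = b * (((p:ℚ)+3) - ((q:ℚ)+3) - 1) := by
      have := cast_csr (p+1) (q+2)
      push_cast at this ⊢
      linear_combination this
    have hk := key ((p:ℚ)+3) ((q:ℚ)+3) a b d e r1 r2 r3
    field_simp
    linear_combination hk

lemma prec (n : ℕ) (hn : 2 ≤ n) :
    (C (n:ℚ) + 1) * narayanaA2 n
      = (2 * C (n:ℚ) - 1) * ((X 0 + X 1) * narayanaA2 (n-1))
        - (C (n:ℚ) - 2) * ((X 0 - X 1)^2 * narayanaA2 (n-2)) := by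
  rcases eq_or_lt_of_le hn with h2 | h3
  · obtain rfl : n = 2 := h2.symm
    norm_num [narayana_two, narayana_one, narayana_zero]
    rw [map_ofNat]
    ring
  · obtain ⟨p, rfl⟩ : ∃ p, n = p + 3 := ⟨n - 3, by omega⟩
    have e1 : p + 3 - 1 = p + 2 := by omega
    have e2 : p + 3 - 2 = p + 1 := by omega
    rw [e1, e2, narayana_rep (p+3), narayana_rep (p+2), narayana_rep (p+1)]
    rw [show ((p+3:ℕ):ℚ) = (p:ℚ)+3 from by push_cast; ring]
    have h02 : nu (p+2) 0 = 0 := nu_zero_right _ (by omega)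
    have h01 : nu (p+1) 0 = 0 := nu_zero_right _ (by omega)
    set R2 : MvPolynomial (Fin 2) ℚ := rep (nu (p+2)) (p+2+1) (p+2+2) with hR2
    set R1 : MvPolynomial (Fin 2) ℚ := rep (nu (p+1)) (p+1+1) (p+1+2) with hR1
    have hA : X 0 * R2 = rep (fun k => nu (p+2) (k-1)) (p+4) (p+5) := by
      rw [hR2, rep_mulX0 _ _ _ h02]
    have hB : X 1 * R2 = rep (nu (p+2)) (p+4) (p+5) := by
      rw [hR2, rep_mulX1 _ _ _ (by omega)]
      exact rep_extend (by omega) (fun k hk => nu_eq_zero_of_gt (by omega))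
    have hq1 : X 0 * (X 0 * R1) = rep (fun k => nu (p+1) (k-1-1)) (p+4) (p+5) := by
      rw [hR1, rep_mulX0 _ _ _ h01, rep_mulX0 _ _ _ (by simpa using h01)]
    have hq2 : X 0 * (X 1 * R1) = rep (fun k => nu (p+1) (k-1)) (p+4) (p+5) := by
      rw [hR1, rep_mulX1 _ _ _ (by omega), rep_mulX0 _ _ _ h01]
      exact rep_extend (by omega) (fun k hk => nu_eq_zero_of_gt (by omega))
    have hq3 : X 1 * (X 1 * R1) = rep (nu (p+1)) (p+4) (p+5) := by
      rw [hR1, rep_mulX1 _ _ _ (by omega), rep_mulX1 _ _ _ (by omega)]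
      exact rep_extend (by omega) (fun k hk => nu_eq_zero_of_gt (by omega))
    have hsum : (X 0 + X 1) * R2
        = rep (fun k => nu (p+2) (k-1) + nu (p+2) k) (p+4) (p+5) := by
      rw [add_mul, hA, hB, rep_add]
    have hsq : (X 0 - X 1)^2 * R1
        = rep (fun k => nu (p+1) (k-1-1) - 2 * nu (p+1) (k-1) + nu (p+1) k) (p+4) (p+5) := by
      have expand : (X 0 - X 1)^2 * R1
          = (X 0 * (X 0 * R1) - C (2:ℚ) * (X 0 * (X 1 * R1))) + X 1 * (X 1 * R1) := by
        rw [map_ofNat]; ring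
      rw [expand, hq1, hq2, hq3, rep_smul, rep_sub, rep_add]
    have c1 : (C ((p:ℚ)+3) + 1 : MvPolynomial (Fin 2) ℚ) = C ((p:ℚ)+4) := by
      rw [show (p:ℚ)+4 = ((p:ℚ)+3)+1 by ring]
      conv_rhs => rw [map_add, map_one]
    have c2 : (2 * C ((p:ℚ)+3) - 1 : MvPolynomial (Fin 2) ℚ) = C (2*(p:ℚ)+5) := by
      rw [show 2*(p:ℚ)+5 = 2*((p:ℚ)+3)-1 by ring]
      conv_rhs => rw [map_sub, map_mul, map_one, map_ofNat]
    have c3 : (C ((p:ℚ)+3) - 2 : MvPolynomial (Fin 2) ℚ) = C ((p:ℚ)+1) := by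
      rw [show (p:ℚ)+1 = ((p:ℚ)+3)-2 by ring]
      conv_rhs => rw [map_sub, map_ofNat]
    rw [c1, c2, c3, hsum, hsq]
    rw [show p+3+1 = p+4 by omega, show p+3+2 = p+5 by omega]
    rw [rep_smul, rep_smul, rep_smul, rep_sub]
    refine rep_congr fun k _ => ?_
    have := nu_prec p k
    rw [show k-1-1 = k-2 by omega] 
    linear_combination this
noncomputable def Cc (m : ℕ) : MvPolynomial (Fin 2) ℚ :=
  ∑ a ∈ Finset.range (m+1), narayanaA2 a * narayanaA2 (m - a)

lemma W (p : ℕ) :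
    2 * ∑ a ∈ Finset.range (p+1), C (a:ℚ) * (narayanaA2 a * narayanaA2 (p-a))
      = C (p:ℚ) * Cc p := by
  have hrefl := Finset.sum_range_reflect
    (fun a => C (a:ℚ) * (narayanaA2 a * narayanaA2 (p-a))) (p+1)
  simp only [Nat.add_sub_cancel] at hrefl
  rw [two_mul]
  nth_rewrite 1 [← hrefl]
  rw [← Finset.sum_add_distrib, Cc, Finset.mul_sum]
  refine Finset.sum_congr rfl fun a ha => ?_
  have hap : a ≤ p := by have := Finset.mem_range.mp ha; omega
  rw [show p - (p - a) = a by omega]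
  have hcast : (C (((p-a:ℕ):ℚ)) : MvPolynomial (Fin 2) ℚ) = C ((p:ℚ) - (a:ℚ)) := by
    rw [Nat.cast_sub hap]
  rw [hcast, show ((p:ℚ) - a) = (p:ℚ) + (-(a:ℚ)) by ring, map_add]
  rw [show (-(a:ℚ)) = (0:ℚ) - a by ring, map_sub, map_zero]
  ring

lemma master (m : ℕ) (hm : 2 ≤ m) :
    (C (m:ℚ) + 2) * Cc m
      = 2 * (X 1 * narayanaA2 m) + 4 * (X 0 * X 1 * narayanaA2 (m-1))
        + 2 * (X 0 + X 1) * (C (m:ℚ) * Cc (m-1) - X 1 * narayanaA2 (m-1))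
        - (X 0 - X 1)^2 * ((C (m:ℚ) - 2) * Cc (m-2)) := by
  obtain ⟨r, rfl⟩ : ∃ r, m = r + 2 := ⟨m - 2, by omega⟩
  rw [show r+2-1 = r+1 by omega, show r+2-2 = r by omega]
  set N : ℕ → MvPolynomial (Fin 2) ℚ := narayanaA2 with hN
  set S : MvPolynomial (Fin 2) ℚ :=
    ∑ a ∈ Finset.range (r+3), (C (a:ℚ) + 1) * (N a * N (r+2-a)) with hS
  set U : MvPolynomial (Fin 2) ℚ :=
    ∑ b ∈ Finset.range (r+2), (2 * C (b:ℚ) + 1) * (N b * N (r+1-b)) with hU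
  set V : MvPolynomial (Fin 2) ℚ :=
    ∑ a ∈ Finset.range (r+1), C (a:ℚ) * (N a * N (r-a)) with hV
  -- (E1) 2*S = (C (r+2) + 2) * Cc (r+2)
  have E1 : 2 * S = (C ((r:ℚ)+2) + 2) * Cc (r+2) := by
    have w := W (r+2)
    rw [show r+2+1 = r+3 by omega] at w
    have hsplit : 2 * S
        = 2 * ∑ a ∈ Finset.range (r+3), C (a:ℚ) * (N a * N (r+2-a))
          + 2 * ∑ a ∈ Finset.range (r+3), N a * N (r+2-a) := by
      rw [hS, Finset.mul_sum, Finset.mul_sum, Finset.mul_sum, ← Finset.sum_add_distrib]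
      exact Finset.sum_congr rfl fun a _ => by ring
    rw [hsplit, w, show (∑ a ∈ Finset.range (r+3), N a * N (r+2-a)) = Cc (r+2) from by
      rw [Cc, show r+2+1 = r+3 by omega]]
    rw [show ((r+2:ℕ):ℚ) = (r:ℚ)+2 from by push_cast; ring]
    ring
  -- (E4) 2*V = C r * Cc r
  have E4 : 2 * V = C (r:ℚ) * Cc r := W r
  -- (E3) U = (C r + 3) * Cc (r+1)
  have E3 : U = (C ((r:ℚ)+1) + 1) * Cc (r+1) := by
    have w := W (r+1)
    rw [show r+1+1 = r+2 by omega] at w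
    have hsplit : U
        = 2 * ∑ b ∈ Finset.range (r+2), C (b:ℚ) * (N b * N (r+1-b))
          + ∑ b ∈ Finset.range (r+2), N b * N (r+1-b) := by
      rw [hU, Finset.mul_sum, ← Finset.sum_add_distrib]
      exact Finset.sum_congr rfl fun b _ => by ring
    rw [hsplit, w, show (∑ b ∈ Finset.range (r+2), N b * N (r+1-b)) = Cc (r+1) from by
      rw [Cc, show r+1+1 = r+2 by omega]]
    rw [show ((r+1:ℕ):ℚ) = (r:ℚ)+1 from by push_cast; ring]
    ring
  -- (E2) peel and apply prec
  have E2 : S = X 1 * N (r+2) + 2 * (X 0 * X 1 * N (r+1))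
      + ((X 0 + X 1) * (U - X 1 * N (r+1)) - (X 0 - X 1)^2 * V) := by
    have hpeel : S = (∑ a ∈ Finset.range (r+1), (C ((a:ℚ)+2) + 1) * (N (a+2) * N (r-a)))
        + (C ((0+1:ℕ):ℚ) + 1) * (N (0+1) * N (r+2-(0+1)))
        + (C ((0:ℕ):ℚ) + 1) * (N 0 * N (r+2-0)) := by
      have hmid : ∀ a ∈ Finset.range (r+1),
          (C ((a+1+1:ℕ):ℚ) + 1) * (N (a+1+1) * N (r+2-(a+1+1)))
            = (C ((a:ℚ)+2) + 1) * (N (a+2) * N (r-a)) := fun a _ => by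
        rw [show a+1+1 = a+2 by omega, show r+2-(a+2) = r-a by omega,
          show ((a+2:ℕ):ℚ) = (a:ℚ)+2 from by push_cast; ring]
      rw [hS, Finset.sum_range_succ', Finset.sum_range_succ', Finset.sum_congr rfl hmid]
    have hterm : ∀ a ∈ Finset.range (r+1),
        (C ((a:ℚ)+2) + 1) * (N (a+2) * N (r-a))
          = (X 0 + X 1) * ((2 * C ((a:ℚ)+2) - 1) * (N (a+1) * N (r-a)))
            - (X 0 - X 1)^2 * ((C ((a:ℚ)+2) - 2) * (N a * N (r-a))) := by
      intro a _
      have hp := prec (a+2) (by omega)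
      rw [show a+2-1 = a+1 by omega, show a+2-2 = a by omega,
        show ((a+2:ℕ):ℚ) = (a:ℚ)+2 from by push_cast; ring] at hp
      calc (C ((a:ℚ)+2) + 1) * (N (a+2) * N (r-a))
          = ((C ((a:ℚ)+2) + 1) * N (a+2)) * N (r-a) := by ring
        _ = ((2 * C ((a:ℚ)+2) - 1) * ((X 0 + X 1) * N (a+1))
              - (C ((a:ℚ)+2) - 2) * ((X 0 - X 1)^2 * N a)) * N (r-a) := by rw [hp]
        _ = _ := by ring
    rw [hpeel, Finset.sum_congr rfl hterm]
    rw [show r+2-(0+1) = r+1 by omega, show r+2-0 = r+2 by omega,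
      show ((0+1:ℕ):ℚ) = ((1:ℕ):ℚ) from by norm_num]
    rw [Finset.sum_sub_distrib]
    have hT1 : (∑ a ∈ Finset.range (r+1),
          (X 0 + X 1) * ((2 * C ((a:ℚ)+2) - 1) * (N (a+1) * N (r-a))))
        = (X 0 + X 1) * (U - (2 * C ((0:ℕ):ℚ) + 1) * (N 0 * N (r+1))) := by
      have hu : U = (∑ a ∈ Finset.range (r+1),
          (2 * C (((a+1:ℕ)):ℚ) + 1) * (N (a+1) * N (r+1-(a+1))))
          + (2 * C ((0:ℕ):ℚ) + 1) * (N 0 * N (r+1-0)) := by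
        rw [hU, Finset.sum_range_succ']
      rw [hu, show r+1-0 = r+1 by omega]
      rw [show ((∑ a ∈ Finset.range (r+1),
          (2 * C (((a+1:ℕ)):ℚ) + 1) * (N (a+1) * N (r+1-(a+1))))
          + (2 * C ((0:ℕ):ℚ) + 1) * (N 0 * N (r+1))
          - (2 * C ((0:ℕ):ℚ) + 1) * (N 0 * N (r+1)))
        = ∑ a ∈ Finset.range (r+1),
          (2 * C (((a+1:ℕ)):ℚ) + 1) * (N (a+1) * N (r+1-(a+1))) from by ring]
      rw [Finset.mul_sum]
      refine Finset.sum_congr rfl fun a _ => ?_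
      rw [show r+1-(a+1) = r-a by omega,
        show ((a+1:ℕ):ℚ) = (a:ℚ)+1 from by push_cast; ring,
        show (2 * C ((a:ℚ)+1) + 1 : MvPolynomial (Fin 2) ℚ)
          = 2 * C ((a:ℚ)+2) - 1 from by
          rw [show (a:ℚ)+2 = ((a:ℚ)+1)+1 by ring]
          conv_rhs => rw [map_add, map_one]
          ring]
    have hT2 : (∑ a ∈ Finset.range (r+1),
          (X 0 - X 1)^2 * ((C ((a:ℚ)+2) - 2) * (N a * N (r-a))))
        = (X 0 - X 1)^2 * V := by
      rw [hV, Finset.mul_sum]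
      refine Finset.sum_congr rfl fun a _ => ?_
      rw [show (C ((a:ℚ)+2) - 2 : MvPolynomial (Fin 2) ℚ) = C (a:ℚ) from by
        conv_lhs => rw [map_add, map_ofNat]
        ring]
    rw [hT1, hT2]
    have h0 : (C ((0:ℕ):ℚ) : MvPolynomial (Fin 2) ℚ) = 0 := by
      rw [Nat.cast_zero, map_zero]
    have h1 : (C ((1:ℕ):ℚ) : MvPolynomial (Fin 2) ℚ) = 1 := by
      rw [Nat.cast_one, map_one]
    rw [h0, h1, show N 0 = X 1 from narayana_zero, show N 1 = X 0 * X 1 from narayana_one]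
    ring
  -- combine
  rw [show ((r+2:ℕ):ℚ) = (r:ℚ)+2 from by push_cast; ring]
  have c1 : (C ((r:ℚ)+2) : MvPolynomial (Fin 2) ℚ) = C (r:ℚ) + 2 := by
    rw [map_add, map_ofNat]
  have c2 : (C ((r:ℚ)+1) : MvPolynomial (Fin 2) ℚ) = C (r:ℚ) + 1 := by
    rw [map_add, map_one]
  rw [c1] at E1 ⊢
  rw [c2] at E3
  linear_combination (-1 : MvPolynomial (Fin 2) ℚ) * E1 + 2 * E2
    + 2 * (X 0 + X 1) * E3 - (X 0 - X 1)^2 * E4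

lemma Q : ∀ n : ℕ, 1 ≤ n →
    narayanaA2 n = (X 0 - X 1) * narayanaA2 (n-1) + Cc (n-1) := by
  intro n
  induction n using Nat.strong_induction_on with
  | _ n ih =>
    intro hn
    match n, hn with
    | 1, _ =>
      rw [show (1:ℕ)-1 = 0 by omega, narayana_one, narayana_zero, Cc]
      rw [Finset.sum_range_one, narayana_zero]
      ring
    | 2, _ =>
      rw [show (2:ℕ)-1 = 1 by omega, narayana_two, narayana_one, Cc]
      rw [Finset.sum_range_succ, Finset.sum_range_one]
      rw [show (1:ℕ)-0 = 1 by omega, show (1:ℕ)-1 = 0 by omega,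
        narayana_zero, narayana_one]
      ring
    | (m+3), _ =>
      have hq1 := ih (m+2) (by omega) (by omega)
      have hq2 := ih (m+1) (by omega) (by omega)
      rw [show m+2-1 = m+1 by omega] at hq1
      rw [show m+1-1 = m by omega] at hq2
      have hM := master (m+2) (by omega)
      rw [show m+2-1 = m+1 by omega, show m+2-2 = m by omega] at hM
      have hP1 := prec (m+3) (by omega)
      rw [show m+3-1 = m+2 by omega, show m+3-2 = m+1 by omega] at hP1
      have hP0 := prec (m+2) (by omega)
      rw [show m+2-1 = m+1 by omega, show m+2-2 = m by omega] at hP0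
      rw [show ((m+3:ℕ):ℚ) = (m:ℚ)+3 from by push_cast; ring] at hP1
      rw [show ((m+2:ℕ):ℚ) = (m:ℚ)+2 from by push_cast; ring] at hP0 hM
      have c3 : (C ((m:ℚ)+3) : MvPolynomial (Fin 2) ℚ) = C (m:ℚ) + 3 := by
        rw [map_add, map_ofNat]
      have c2 : (C ((m:ℚ)+2) : MvPolynomial (Fin 2) ℚ) = C (m:ℚ) + 2 := by
        rw [map_add, map_ofNat]
      rw [c3] at hP1
      rw [c2] at hP0 hM
      rw [show m+3-1 = m+2 by omega]
      have key2 : (C ((m:ℚ)) + 4)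
          * (narayanaA2 (m+3) - ((X 0 - X 1) * narayanaA2 (m+2) + Cc (m+2))) = 0 := by
        linear_combination hP1 - (X 0 - X 1) * hP0 - hM
          + 2 * (C ((m:ℚ)) + 2) * (X 0 + X 1) * hq1
          + (2 - (C ((m:ℚ)) + 2)) * (X 0 - X 1)^2 * hq2
      have hC : (C ((m:ℚ)) + 4 : MvPolynomial (Fin 2) ℚ) ≠ 0 := by
        rw [show (C ((m:ℚ)) + 4 : MvPolynomial (Fin 2) ℚ) = C ((m:ℚ)+4) from by
          rw [map_add, map_ofNat]]
        rw [Ne, MvPolynomial.C_eq_zero]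
        positivity
      rcases mul_eq_zero.mp key2 with h | h
      · exact absurd h hC
      · exact sub_eq_zero.mp h

theorem narayanaA_convolution (n : ℕ) (hn : 2 ≤ n) :
    narayanaA2 n =
      (X 0 + X 1) * narayanaA2 (n - 1) +
        ∑ k ∈ Finset.Icc 2 (n - 1), narayanaA2 (k - 1) * narayanaA2 (n - k) := by
  obtain ⟨r, rfl⟩ : ∃ r, n = r + 2 := ⟨n - 2, by omega⟩
  have hq := Q (r+2) (by omega)
  rw [show r+2-1 = r+1 by omega] at hq ⊢
  have hcc : Cc (r+1) = X 1 * narayanaA2 (r+1) + narayanaA2 (r+1) * X 1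
      + ∑ k ∈ Finset.Icc 2 (r+1), narayanaA2 (k-1) * narayanaA2 (r+2-k) := by
    have hmid : ∀ a ∈ Finset.range r,
        narayanaA2 (a+1) * narayanaA2 (r+1-(a+1))
          = narayanaA2 (2+a-1) * narayanaA2 (r+2-(2+a)) := fun a _ => by
      rw [show 2+a-1 = a+1 by omega, show r+2-(2+a) = r+1-(a+1) by omega]
    have hIcc : (∑ k ∈ Finset.Icc 2 (r+1), narayanaA2 (k-1) * narayanaA2 (r+2-k))
        = ∑ a ∈ Finset.range r, narayanaA2 (a+1) * narayanaA2 (r+1-(a+1)) := by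
      rw [show Finset.Icc 2 (r+1) = Finset.Ico 2 (r+2) from rfl,
        Finset.sum_Ico_eq_sum_range, show r+2-2 = r by omega,
        Finset.sum_congr rfl hmid]
    rw [Cc, Finset.sum_range_succ', Finset.sum_range_succ, hIcc]
    rw [show r+1-0 = r+1 by omega, show r+1-(r+1) = 0 by omega, narayana_zero]
    ring
  rw [hcc] at hq
  linear_combination hq
end

section
/- For every positive integer n, the Narayana polynomial of type B, N^B_n(x) = Σ_{k=0}^{n} C(n,k)²·x^k, has only real roots. -/
open Polynomial

/-- The Narayana polynomial of type B: `N^B_n(x) = ∑_{k=0}^n C(n,k)² x^k`. -/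
noncomputable def narayanaB (n : ℕ) : Polynomial ℤ :=
  ∑ k ∈ Finset.range (n + 1), C ((n.choose k : ℤ) ^ 2) * X ^ k

/-- Rolle-style bound iterated. -/
lemma card_roots_le_iterate_derivative (p : ℝ[X]) (k : ℕ) :
    p.roots.card ≤ (Polynomial.derivative^[k] p).roots.card + k := by
  induction k with
  | zero => simp
  | succ k ih =>
    refine ih.trans ?_
    have := (Polynomial.derivative^[k] p).card_roots_le_derivative
    rw [Function.iterate_succ_apply']
    omega

lemma leibniz_formula (n : ℕ) :
    Polynomial.derivative^[n] ((X : ℝ[X]) ^ n * (X + Polynomial.C 1) ^ n) =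
      ∑ k ∈ Finset.range (n + 1),
        Polynomial.C ((n.factorial : ℝ) * (n.choose k) ^ 2) * X ^ k
          * (X + Polynomial.C 1) ^ (n - k) := by
  rw [Polynomial.iterate_derivative_mul]
  refine Finset.sum_congr rfl fun k hk => ?_
  have hkn : k ≤ n := by
    simpa using Nat.lt_succ_iff.mp (Finset.mem_range.mp hk)
  rw [Polynomial.iterate_derivative_X_pow_eq_C_mul,
    Polynomial.iterate_derivative_X_add_pow]
  have h1 : n - (n - k) = k := by omega
  rw [h1]
  have hnum : n.choose k * (n.descFactorial (n - k) * n.descFactorial k)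
      = n.factorial * n.choose k ^ 2 := by
    rw [Nat.descFactorial_eq_factorial_mul_choose, Nat.descFactorial_eq_factorial_mul_choose,
      Nat.choose_symm hkn]
    have := Nat.choose_mul_factorial_mul_factorial hkn
    ring_nf
    nlinarith [this]
  have : ((n.choose k * (n.descFactorial (n - k) * n.descFactorial k) : ℕ) : ℝ)
      = (n.factorial : ℝ) * (n.choose k) ^ 2 := by
    rw [hnum]; push_cast; ring
  simp only [nsmul_eq_mul, ← Polynomial.C_eq_natCast, ← Polynomial.C_mul, ← this]
  rw [Nat.cast_mul, Nat.cast_mul, Polynomial.C_mul, Polynomial.C_mul]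
  ring

theorem narayanaB_real_rooted (n : ℕ) (hn : 1 ≤ n) (z : ℂ) :
    ((narayanaB n).map (algebraMap ℤ ℂ)).IsRoot z → z.im = 0 := by
  intro hz
  by_contra him
  -- setup
  set f : ℝ[X] := (X : ℝ[X]) ^ n * (X + Polynomial.C 1) ^ n with hf
  set g : ℝ[X] := Polynomial.derivative^[n] f with hg
  have hX1 : ((X : ℝ[X]) + Polynomial.C 1) ≠ 0 := Polynomial.X_add_C_ne_zero 1
  have hfne : f ≠ 0 :=
    mul_ne_zero (pow_ne_zero _ Polynomial.X_ne_zero) (pow_ne_zero _ hX1)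
  have hfdeg : f.natDegree = 2 * n := by
    rw [hf, Polynomial.natDegree_mul (pow_ne_zero _ Polynomial.X_ne_zero)
      (pow_ne_zero _ hX1),
      Polynomial.natDegree_pow, Polynomial.natDegree_pow, Polynomial.natDegree_X,
      Polynomial.natDegree_X_add_C]
    omega
  have hfroots : f.roots.card = 2 * n := by
    have h1 : ((X : ℝ[X]) + Polynomial.C 1) = X - Polynomial.C (-1) := by
      rw [map_neg, sub_neg_eq_add]
    rw [hf, Polynomial.roots_mul (mul_ne_zero (pow_ne_zero _ Polynomial.X_ne_zero)
      (pow_ne_zero _ hX1)), Polynomial.roots_pow, Polynomial.roots_pow, Polynomial.roots_X,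
      h1, Polynomial.roots_X_sub_C]
    simp [Multiset.card_nsmul]
    try omega
  -- g has at least n roots and degree at most n
  have hle : n ≤ g.roots.card := by
    have := card_roots_le_iterate_derivative f n
    rw [← hg] at this
    omega
  have hdegle : g.natDegree ≤ n := by
    have := Polynomial.natDegree_iterate_derivative f n
    rw [← hg, hfdeg] at this
    omega
  have hcard : g.roots.card = g.natDegree := by
    have := g.card_roots' ; omega
  have hgne : g ≠ 0 := by
    intro h
    rw [h] at hle
    simp at hle
    omega
  have hsplits : g.Splits := (Polynomial.splits_iff_card_roots).mpr hcard
  -- the root x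
  have hz1 : z ≠ 1 := by
    intro h; rw [h] at him; simp at him
  set x : ℂ := (z - 1)⁻¹ with hx
  have hzx : x + 1 = z * x := by
    rw [hx]; field_simp [sub_ne_zero.mpr hz1]
    try ring
  -- evaluate g at x
  have hgev : (g.map (algebraMap ℝ ℂ)).eval x = 0 := by
    rw [hg, leibniz_formula, Polynomial.map_sum]
    have : ∀ k ∈ Finset.range (n + 1),
        ((Polynomial.C ((n.factorial : ℝ) * (n.choose k) ^ 2) * X ^ k
          * (X + Polynomial.C 1) ^ (n - k)).map (algebraMap ℝ ℂ)).eval x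
        = (n.factorial : ℂ) * ((n.choose k : ℂ) ^ 2 * z ^ (n - k)) * x ^ n := by
      intro k hk
      have hkn : k ≤ n := Nat.lt_succ_iff.mp (Finset.mem_range.mp hk)
      simp only [Polynomial.map_mul, Polynomial.map_pow, Polynomial.map_C,
        Polynomial.map_add, Polynomial.map_X, Polynomial.eval_mul, Polynomial.eval_pow,
        Polynomial.eval_C, Polynomial.eval_add, Polynomial.eval_X, Polynomial.eval_one,
        map_one, map_mul, map_pow, map_natCast, Polynomial.map_natCast,
        Polynomial.eval_natCast, Polynomial.map_one]
      rw [show ((x : ℂ) + 1) = z * x from by simpa using hzx]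
      rw [mul_pow]
      have hxx : x ^ k * x ^ (n - k) = x ^ n := by
        rw [← pow_add, Nat.add_sub_cancel' hkn]
      have : x ^ k * (z ^ (n - k) * x ^ (n - k)) = z ^ (n - k) * x ^ n := by
        rw [← hxx]; ring
      rw [mul_assoc, this]
      ring
    rw [Polynomial.eval_finset_sum, Finset.sum_congr rfl this, ← Finset.sum_mul,
      ← Finset.mul_sum]
    have hsum : ∑ k ∈ Finset.range (n + 1), (n.choose k : ℂ) ^ 2 * z ^ (n - k)
        = ∑ k ∈ Finset.range (n + 1), (n.choose k : ℂ) ^ 2 * z ^ k := by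
      rw [← Finset.sum_range_reflect]
      refine Finset.sum_congr rfl fun k hk => ?_
      have hkn : k ≤ n := Nat.lt_succ_iff.mp (Finset.mem_range.mp hk)
      rw [show n + 1 - 1 - k = n - k from by omega, Nat.choose_symm hkn,
        show n - (n - k) = k from by omega]
    have hNz : ∑ k ∈ Finset.range (n + 1), (n.choose k : ℂ) ^ 2 * z ^ k = 0 := by
      have := hz
      rw [Polynomial.IsRoot, narayanaB, Polynomial.map_sum] at this
      simpa [Polynomial.eval_finset_sum] using this
    rw [hsum, hNz]
    ring
  -- x is real
  have hmapne : g.map (algebraMap ℝ ℂ) ≠ 0 :=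
    (Polynomial.map_ne_zero_iff (algebraMap ℝ ℂ).injective).mpr hgne
  have hxmem : x ∈ (g.map (algebraMap ℝ ℂ)).roots :=
    Polynomial.mem_roots'.mpr ⟨hmapne, hgev⟩
  have hxreal : x.im = 0 := by
    rw [hsplits.roots_map _, Multiset.mem_map] at hxmem
    obtain ⟨r, _, hr⟩ := hxmem
    rw [← hr]
    simp [Complex.ext_iff]
  -- contradiction
  have : x.im = -z.im / Complex.normSq (z - 1) := by
    rw [hx, Complex.inv_im, Complex.sub_im]
    norm_num
  rw [this] at hxreal
  have hne : Complex.normSq (z - 1) ≠ 0 := by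
    simpa [Complex.normSq_eq_zero, sub_eq_zero] using hz1
  have : z.im = 0 := by
    field_simp at hxreal
    simpa using hxreal
  exact him this
end

section
/- Let D be the derivation on ℚ[t,x,y] determined by D(t) = t²(x+y), D(x) = 2txy, D(y) = 2txy. Then for every n ≥ 0, D^n(y) = (n+1)!·t^n·N^A_n(x,y), where N^A_n(x,y) = Σ_{k=1}^{n} (1/n)·C(n,k)·C(n,k-1)·x^k·y^{n-k+1} for n ≥ 1 and N^A_0(x,y) = y. -/
open MvPolynomial

noncomputable def ccq (n k : ℕ) : ℚ := (n.choose k * n.choose (k-1) : ℚ) / n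

lemma choose_pred (n : ℕ) (hn : 1 ≤ n) : n.choose (n-1) = n := by
  rw [Nat.choose_symm hn, Nat.choose_one_right]

lemma coeff_one (n : ℕ) (hn : 1 ≤ n) :
    ccq n 1 * ((n:ℚ)+2*((1:ℕ):ℚ)) = ((n:ℚ)+2) * ccq (n+1) 1 := by
  have hn0 : ((n:ℚ)) ≠ 0 := by positivity
  have hn1 : ((n:ℚ)+1) ≠ 0 := by positivity
  simp only [ccq, Nat.choose_one_right, Nat.choose_zero_right, Nat.sub_self]
  push_cast
  field_simp

lemma coeff_top (n : ℕ) (hn : 1 ≤ n) :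
    ccq n n * ((n:ℚ) + 2*((n - n + 1:ℕ):ℚ)) = ((n:ℚ)+2) * ccq (n+1) (n+1) := by
  have hn0 : ((n:ℚ)) ≠ 0 := by positivity
  have hn1 : ((n:ℚ)+1) ≠ 0 := by positivity
  have h1 : n.choose (n-1) = n := choose_pred n hn
  have h2 : (n+1).choose n = n+1 := by simpa using choose_pred (n+1) (by omega)
  simp only [ccq, h1, Nat.choose_self, Nat.add_sub_cancel, h2, Nat.sub_self]
  push_cast
  field_simp

lemma coeff_interior (m q : ℕ) :
    ccq (m+q+2) (m+1) * ((m+q+2:ℚ) + 2*(q+2)) + ccq (m+q+2) (m+2) * ((m+q+2:ℚ)+2*(m+2))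
      = ((m+q+2:ℚ)+2) * ccq (m+q+3) (m+2) := by
  set n := m + q + 2 with hn
  have h1 : n.choose (m+2) * (m+2) = n.choose (m+1) * (q+1) := by
    have := Nat.choose_succ_right_eq n (m+1)
    rw [show n - (m+1) = q+1 by omega] at this
    simpa [hn] using this
  have h2 : n.choose (m+1) * (m+1) = n.choose m * (q+2) := by
    have := Nat.choose_succ_right_eq n m
    rw [show n - m = q+2 by omega] at this
    simpa [hn] using this
  have p1 : (n+1).choose (m+2) = n.choose (m+1) + n.choose (m+2) := Nat.choose_succ_succ' _ _
  have p2 : (n+1).choose (m+1) = n.choose m + n.choose (m+1) := Nat.choose_succ_succ' _ _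
  have hA : (0:ℚ) < (n.choose (m+1) : ℚ) := by
    exact_mod_cast Nat.choose_pos (by omega)
  have hB : (n.choose (m+2) : ℚ) = (n.choose (m+1):ℚ) * (q+1) / (m+2) := by
    have := congrArg (Nat.cast : ℕ → ℚ) h1
    push_cast at this
    field_simp
    linarith [this]
  have hE : (n.choose m : ℚ) = (n.choose (m+1):ℚ) * (m+1) / (q+2) := by
    have := congrArg (Nat.cast : ℕ → ℚ) h2
    push_cast at this
    field_simp
    linarith [this]
  have hq : ccq (m+q+3) (m+2) = ccq (n+1) (m+2) := by norm_num [hn]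
  rw [hq]
  simp only [ccq, show (m+1)-1 = m by omega, show (m+2)-1 = m+1 by omega, p1, p2]
  push_cast
  rw [hB, hE]
  have hn0 : ((n:ℚ)) ≠ 0 := by positivity
  have hn1 : ((n:ℚ)+1) ≠ 0 := by positivity
  field_simp
  push_cast [hn]
  ring

lemma Dmon (D : Derivation ℚ (MvPolynomial (Fin 3) ℚ) (MvPolynomial (Fin 3) ℚ))
    (ht : D (X 0) = X 0 ^ 2 * (X 1 + X 2))
    (hx : D (X 1) = 2 * X 0 * X 1 * X 2)
    (hy : D (X 2) = 2 * X 0 * X 1 * X 2) (a b c : ℕ) :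
    D (X 0 ^ (a+1) * X 1 ^ (b+1) * X 2 ^ (c+1)) =
      C ((a:ℚ)+1+2*(c+1)) * (X 0 ^ (a+2) * X 1 ^ (b+2) * X 2 ^ (c+1))
      + C ((a:ℚ)+1+2*(b+1)) * (X 0 ^ (a+2) * X 1 ^ (b+1) * X 2 ^ (c+2)) := by
  rw [Derivation.leibniz, Derivation.leibniz, Derivation.leibniz_pow,
    Derivation.leibniz_pow, Derivation.leibniz_pow, ht, hx, hy]
  simp only [smul_eq_mul, nsmul_eq_mul, Nat.add_sub_cancel, map_add, map_mul, map_ofNat,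
    map_one, map_natCast, C_add, C_1, C_mul]
  push_cast
  ring

/-- The homogeneous Narayana polynomial of type A inside `ℚ[t,x,y]`, where
`X 0 = t`, `X 1 = x`, `X 2 = y`. -/
noncomputable def narayanaA3 (n : ℕ) : MvPolynomial (Fin 3) ℚ :=
  if n = 0 then X 2
  else ∑ k ∈ Finset.Icc 1 n,
    MvPolynomial.C ((n.choose k * n.choose (k - 1) : ℚ) / n) * X 1 ^ k * X 2 ^ (n - k + 1)

lemma narayana_eq (n : ℕ) (hn : 1 ≤ n) :
    narayanaA3 n = ∑ k ∈ Finset.Icc 1 n, C (ccq n k) * X 1 ^ k * X 2 ^ (n - k + 1) := by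
  rw [narayanaA3, if_neg (by omega)]
  rfl

lemma key_s14 (D : Derivation ℚ (MvPolynomial (Fin 3) ℚ) (MvPolynomial (Fin 3) ℚ))
    (ht : D (X 0) = X 0 ^ 2 * (X 1 + X 2))
    (hx : D (X 1) = 2 * X 0 * X 1 * X 2)
    (hy : D (X 2) = 2 * X 0 * X 1 * X 2) (n : ℕ) :
    D (X 0 ^ n * narayanaA3 n) = C ((n:ℚ)+2) * (X 0 ^ (n+1) * narayanaA3 (n+1)) := by
  rcases Nat.eq_zero_or_pos n with rfl | hn
  · rw [pow_zero, one_mul, show narayanaA3 0 = X 2 by simp [narayanaA3], hy,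
      narayana_eq 1 le_rfl]
    norm_num [ccq]
    rw [show (C 2 : MvPolynomial (Fin 3) ℚ) = 2 from map_ofNat C 2]
    ring
  have Dsmul : ∀ (c : ℚ) (p : MvPolynomial (Fin 3) ℚ), D (C c * p) = C c * D p := by
    intro c p
    rw [← smul_eq_C_mul, D.map_smul, smul_eq_C_mul]
  -- expand LHS as a sum of D of monomials
  have step1 : ∀ k ∈ Finset.Icc 1 n,
      D (X 0 ^ n * (C (ccq n k) * X 1 ^ k * X 2 ^ (n-k+1))) =
      C (ccq n k * ((n:ℚ) + 2*((n-k+1:ℕ):ℚ))) * (X 0^(n+1) * X 1^(k+1) * X 2^(n-k+1))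
      + C (ccq n k * ((n:ℚ) + 2*(k:ℚ))) * (X 0^(n+1) * X 1^k * X 2^(n-k+2)) := by
    intro k hk
    simp only [Finset.mem_Icc] at hk
    obtain ⟨a, ha⟩ : ∃ a, n = a+1 := ⟨n-1, by omega⟩
    obtain ⟨b, hb⟩ : ∃ b, k = b+1 := ⟨k-1, by omega⟩
    have hmul : (X 0 ^ n * (C (ccq n k) * X 1 ^ k * X 2 ^ (n-k+1)) : MvPolynomial (Fin 3) ℚ) =
        C (ccq n k) * (X 0 ^ n * X 1 ^ k * X 2 ^ (n-k+1)) := by ring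
    rw [hmul, Dsmul]
    rw [show (X 0 ^ n * X 1 ^ k * X 2 ^ (n-k+1) : MvPolynomial (Fin 3) ℚ)
        = X 0 ^ (a+1) * X 1 ^ (b+1) * X 2 ^ ((n-k)+1) by rw [ha, hb]]
    rw [Dmon D ht hx hy a b (n-k)]
    rw [mul_add, C_mul, C_mul]
    set c := n - k with hc
    rw [ha, hb]
    push_cast
    ring
  rw [narayana_eq n hn, Finset.mul_sum, map_sum, Finset.sum_congr rfl step1,
    Finset.sum_add_distrib]
  have hins : Finset.Icc 1 (n+1) = insert 1 (Finset.Icc 2 (n+1)) := by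
    ext a; simp only [Finset.mem_Icc, Finset.mem_insert]; omega
  have hu : (∑ j ∈ Finset.Icc 1 (n+1), (if j = 1 then 0 else
        C (ccq n (j-1) * ((n:ℚ) + 2*((n-(j-1)+1:ℕ):ℚ))) *
        (X 0^(n+1) * X 1^j * X 2^(n-(j-1)+1)) : MvPolynomial (Fin 3) ℚ))
      = ∑ k ∈ Finset.Icc 1 n, C (ccq n k * ((n:ℚ) + 2*((n-k+1:ℕ):ℚ))) *
        (X 0^(n+1) * X 1^(k+1) * X 2^(n-k+1)) := by
    rw [hins, Finset.sum_insert (by simp), if_pos rfl, zero_add,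
      show Finset.Icc 2 (n+1) = (Finset.Icc 1 n).map (addRightEmbedding 1) from by
        rw [Finset.map_add_right_Icc],
      Finset.sum_map]
    apply Finset.sum_congr rfl
    intro k hk
    simp only [Finset.mem_Icc] at hk
    rw [addRightEmbedding_apply, if_neg (by omega)]
    simp only [Nat.add_sub_cancel]
  have hv : (∑ j ∈ Finset.Icc 1 (n+1), C (ccq n j * ((n:ℚ)+2*(j:ℚ))) *
        (X 0^(n+1) * X 1^j * X 2^(n-j+2)) : MvPolynomial (Fin 3) ℚ)
      = ∑ k ∈ Finset.Icc 1 n, C (ccq n k * ((n:ℚ)+2*(k:ℚ))) *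
        (X 0^(n+1) * X 1^k * X 2^(n-k+2)) := by
    rw [Finset.sum_Icc_succ_top (by omega : 1 ≤ n+1)]
    have h0 : ccq n (n+1) = 0 := by
      have : n.choose (n+1) = 0 := Nat.choose_eq_zero_of_lt (by omega)
      simp [ccq, this]
    rw [h0]
    simp
  rw [← hu, ← hv, ← Finset.sum_add_distrib,
    narayana_eq (n+1) (by omega), Finset.mul_sum, Finset.mul_sum]
  apply Finset.sum_congr rfl
  intro j hj
  simp only [Finset.mem_Icc] at hj
  rcases eq_or_ne j 1 with rfl | hj1
  · rw [if_pos rfl, zero_add, show n-1+2 = (n+1)-1+1 by omega, coeff_one n hn, C_mul]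
    ring
  rcases eq_or_ne j (n+1) with rfl | hjn
  · rw [if_neg hj1]
    have h0 : ccq n (n+1) = 0 := by
      have : n.choose (n+1) = 0 := Nat.choose_eq_zero_of_lt (by omega)
      simp [ccq, this]
    rw [h0, zero_mul, map_zero, zero_mul, add_zero]
    simp only [Nat.add_sub_cancel]
    rw [coeff_top n hn, show n - n + 1 = (n+1)-(n+1)+1 by omega, C_mul]
    ring
  · rw [if_neg hj1]
    obtain ⟨m, rfl⟩ : ∃ m, j = m+2 := ⟨j-2, by omega⟩
    obtain ⟨q, rfl⟩ : ∃ q, n = m+q+2 := ⟨n-m-2, by omega⟩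
    simp only [show m+2-1 = m+1 from rfl]
    rw [show m+q+2-(m+1)+1 = q+2 by omega, show m+q+2-(m+2)+2 = q+2 by omega,
      show m+q+2+1-(m+2)+1 = q+2 by omega]
    rw [← add_mul, ← C_add]
    have hcoef : ccq (m+q+2) (m+1) * ((m+q+2:ℕ) + 2*((q+2:ℕ):ℚ))
        + ccq (m+q+2) (m+2) * ((m+q+2:ℕ) + 2*((m+2:ℕ):ℚ))
        = ((m+q+2:ℕ) + 2) * ccq (m+q+2+1) (m+2) := by
      have h := coeff_interior m q
      rw [show m+q+2+1 = m+q+3 from rfl]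
      push_cast
      push_cast at h
      linear_combination h
    rw [hcoef, C_mul]
    ring

theorem derivation_iterate_y (D : Derivation ℚ (MvPolynomial (Fin 3) ℚ) (MvPolynomial (Fin 3) ℚ))
    (ht : D (X 0) = X 0 ^ 2 * (X 1 + X 2))
    (hx : D (X 1) = 2 * X 0 * X 1 * X 2)
    (hy : D (X 2) = 2 * X 0 * X 1 * X 2) (n : ℕ) :
    (⇑D)^[n] (X 2) = MvPolynomial.C (((n + 1).factorial : ℚ)) * X 0 ^ n * narayanaA3 n := by
  have Dsmul : ∀ (c : ℚ) (p : MvPolynomial (Fin 3) ℚ), D (C c * p) = C c * D p := by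
    intro c p
    rw [← smul_eq_C_mul, D.map_smul, smul_eq_C_mul]
  induction n with
  | zero => simp [narayanaA3]
  | succ n ih =>
    rw [Function.iterate_succ_apply', ih,
      show C (((n+1).factorial:ℚ)) * X 0 ^ n * narayanaA3 n
        = C (((n+1).factorial:ℚ)) * (X 0 ^ n * narayanaA3 n) from by ring,
      Dsmul, key_s14 D ht hx hy n]
    have hf : ((n+1+1).factorial : ℚ) = ((n+1).factorial:ℚ) * ((n:ℚ)+2) := by
      rw [Nat.factorial_succ]
      push_cast
      ring
    rw [hf, C_mul]
    ring
end

section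
/- Let D be the derivation on the Laurent polynomial ring ℚ[t,t⁻¹,x,y] extending D(t) = t²(x+y), D(x) = 2txy, D(y) = 2txy. Then D(t⁻²) = -2t⁻¹(x+y), D²(t⁻²) = 2(y-x)², and D^n(t⁻²) = 0 for all n ≥ 3. -/
open LaurentPolynomial

/-- The Laurent polynomial ring `ℚ[t,t⁻¹,x,y]`: Laurent polynomials in `t` over `ℚ[x,y]`. -/
abbrev LRing : Type := LaurentPolynomial (MvPolynomial (Fin 2) ℚ)

theorem derivation_t_inv_sq (D : Derivation ℚ LRing LRing)
    (ht : D (T 1) = T 2 * C (MvPolynomial.X 0 + MvPolynomial.X 1))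
    (hx : D (C (MvPolynomial.X 0)) = 2 * T 1 * C (MvPolynomial.X 0 * MvPolynomial.X 1))
    (hy : D (C (MvPolynomial.X 1)) = 2 * T 1 * C (MvPolynomial.X 0 * MvPolynomial.X 1)) :
    D (T (-2)) = -2 * T (-1) * C (MvPolynomial.X 0 + MvPolynomial.X 1) ∧
      (⇑D)^[2] (T (-2)) = 2 * C ((MvPolynomial.X 1 - MvPolynomial.X 0) ^ 2) ∧
      ∀ n : ℕ, 3 ≤ n → (⇑D)^[n] (T (-2)) = 0 := by
  have hmul : ∀ a b : LRing, D (a * b) = a * D b + b * D a := by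
    intro a b; rw [D.leibniz]; simp [smul_eq_mul]
  have hTinv : D (T (-1)) = - C (MvPolynomial.X 0 + MvPolynomial.X 1) := by
    have h0 : D ((T 1 : LRing) * T (-1)) = 0 := by
      rw [show (T 1 : LRing) * T (-1) = 1 by rw [← T_add]; norm_num]
      exact D.map_one_eq_zero
    rw [hmul, ht] at h0
    have h1 := congrArg (fun z => (T (-1) : LRing) * z) h0
    simp only [mul_add, ← mul_assoc, ← T_add] at h1
    norm_num [T_zero] at h1
    rw [map_add]; linear_combination h1
  have hTT : (T (-1) : LRing) * T 1 = 1 := by rw [← T_add]; norm_num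
  have e1 : D (T (-2)) = -2 * T (-1) * C (MvPolynomial.X 0 + MvPolynomial.X 1) := by
    rw [show (T (-2) : LRing) = T (-1) * T (-1) by rw [← T_add]; norm_num, hmul, hTinv]
    ring
  have i2 : (⇑D)^[2] (T (-2)) = 2 * C ((MvPolynomial.X 1 - MvPolynomial.X 0) ^ 2) := by
    have key : (-2 : LRing) * T (-1) * C (MvPolynomial.X 0 + MvPolynomial.X 1)
        = ((-2:ℚ)) • (T (-1) * C (MvPolynomial.X 0 + MvPolynomial.X 1)) := by
      rw [Algebra.smul_def, ← mul_assoc]; norm_num [map_ofNat]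
    have e2 : D (D (T (-2))) = 2 * C ((MvPolynomial.X 1 - MvPolynomial.X 0) ^ 2) := by
      rw [e1, key, D.map_smul, hmul, hTinv]
      rw [show (C (MvPolynomial.X 0 + MvPolynomial.X 1) : LRing)
            = C (MvPolynomial.X 0) + C (MvPolynomial.X 1) from map_add _ _ _]
      rw [map_add, hx, hy, Algebra.smul_def]
      simp only [map_sub, map_pow, map_mul, map_add]
      norm_num [map_ofNat]
      linear_combination (-(8:LRing) * C (MvPolynomial.X 0) * C (MvPolynomial.X 1)) * hTT
    simpa [Function.iterate_succ_apply'] using e2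
  refine ⟨e1, i2, ?_⟩
  have e3 : D (2 * C ((MvPolynomial.X 1 - MvPolynomial.X 0) ^ 2)) = 0 := by
    have k2 : (2 : LRing) * C ((MvPolynomial.X 1 - MvPolynomial.X 0) ^ 2)
        = ((2:ℚ)) • (C ((MvPolynomial.X 1 - MvPolynomial.X 0) ^ 2)) := by
      rw [Algebra.smul_def]; norm_num [map_ofNat]
    rw [k2, D.map_smul,
      show (C ((MvPolynomial.X 1 - MvPolynomial.X 0) ^ 2) : LRing)
        = (C (MvPolynomial.X 1) - C (MvPolynomial.X 0)) * (C (MvPolynomial.X 1) - C (MvPolynomial.X 0)) by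
          rw [map_pow, map_sub]; ring,
      hmul, map_sub, hx, hy]
    simp
  have h3 : (⇑D)^[3] (T (-2)) = 0 := by
    rw [Function.iterate_succ_apply', i2, e3]
  intro n hn
  obtain ⟨k, rfl⟩ := Nat.exists_eq_add_of_le hn
  rw [add_comm, Function.iterate_add_apply, h3]
  exact Function.iterate_fixed D.map_zero k
end

section
/- For every positive integer n, the polynomial Σ_{k=1}^{n} (1/n)·C(n,k)·C(n,k-1)·x^k·y^{n-k+1}, viewed as a polynomial in two complex variables, is stable: it has no zeros (x,y) with both Im(x) > 0 and Im(y) > 0. -/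
open Polynomial

private lemma logDeriv_multiset (z : ℂ) (s : Multiset ℂ) (hz : ∀ r ∈ s, z - r ≠ 0) :
    (Polynomial.derivative (s.map fun r => X - C r).prod).eval z
      = ((s.map fun r => X - C r).prod).eval z * (s.map fun r => (z - r)⁻¹).sum := by
  induction s using Multiset.induction with
  | empty => simp
  | cons a t ih =>
      have ha : z - a ≠ 0 := hz a (Multiset.mem_cons_self a t)
      have ht : ∀ r ∈ t, z - r ≠ 0 := fun r hr => hz r (Multiset.mem_cons_of_mem hr)
      simp only [Multiset.map_cons, Multiset.prod_cons, derivative_mul, derivative_sub,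
        derivative_X, derivative_C, sub_zero, one_mul, eval_add, eval_mul, eval_sub, eval_X,
        eval_C, Multiset.sum_cons, ih ht]
      field_simp

private lemma deriv_eval_ne_zero (p : Polynomial ℂ) (c z : ℂ) (hp : p ≠ 0)
    (hd : p.natDegree ≠ 0)
    (hroots : ∀ r ∈ p.roots, (c * r).re < 0) (hz : 0 ≤ (c * z).re) :
    (Polynomial.derivative p).eval z ≠ 0 := by
  have hsplit : p.Splits := IsAlgClosed.splits p
  have hfac := hsplit.eq_prod_roots
  have hcard : Multiset.card p.roots = p.natDegree := by
    have := hsplit.natDegree_eq_card_roots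
    simpa using this.symm
  have hzr : ∀ r ∈ p.roots, z - r ≠ 0 := by
    intro r hr h0
    have : z = r := by linear_combination h0
    subst this
    exact absurd (hroots z hr) (not_lt.mpr hz)
  have hlc : p.leadingCoeff ≠ 0 := leadingCoeff_ne_zero.mpr hp
  have hev : (Polynomial.derivative p).eval z
      = p.leadingCoeff * (((p.roots.map fun r => X - C r).prod).eval z
          * (p.roots.map fun r => (z - r)⁻¹).sum) := by
    conv_lhs => rw [hfac]
    rw [derivative_mul, derivative_C, zero_mul, zero_add, eval_mul, eval_C,
      logDeriv_multiset z p.roots hzr]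
  have hprod : ((p.roots.map fun r => X - C r).prod).eval z ≠ 0 := by
    rw [eval_multiset_prod]
    apply Multiset.prod_ne_zero
    intro h0
    rw [Multiset.mem_map] at h0
    obtain ⟨q, hq, hq0⟩ := h0
    rw [Multiset.mem_map] at hq
    obtain ⟨r, hr, rfl⟩ := hq
    simp only [eval_sub, eval_X, eval_C] at hq0
    exact hzr r hr hq0
  have hterm : ∀ r ∈ p.roots, 0 < ((starRingEnd ℂ) c * (z - r)⁻¹).re := by
    intro r hr
    have h1 : (c * (z - r)).re > 0 := by
      have := hroots r hr
      simp only [mul_sub, Complex.sub_re]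
      linarith
    have h2 : (0:ℝ) < Complex.normSq (z - r) := by
      rw [Complex.normSq_pos]; exact hzr r hr
    have : (starRingEnd ℂ) c * (z - r)⁻¹
        = (starRingEnd ℂ) (c * (z - r)) * ((Complex.normSq (z - r) : ℂ))⁻¹ := by
      rw [Complex.inv_def, map_mul]; push_cast; ring
    rw [this, ← Complex.ofReal_inv, Complex.mul_re, Complex.ofReal_re, Complex.ofReal_im]
    simp only [Complex.conj_re, Complex.conj_im, mul_zero, sub_zero]
    positivity
  have hne : p.roots ≠ 0 := by
    intro h0
    rw [h0] at hcard
    simp at hcard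
    exact hd hcard.symm
  have hsum : (p.roots.map fun r => (z - r)⁻¹).sum ≠ 0 := by
    intro h0
    have hre : ((starRingEnd ℂ) c * (p.roots.map fun r => (z - r)⁻¹).sum).re
        = ((p.roots.map fun r => (starRingEnd ℂ) c * (z - r)⁻¹)).sum.re := by
      rw [Multiset.sum_map_mul_left]
    have hre2 : ((p.roots.map fun r => (starRingEnd ℂ) c * (z - r)⁻¹)).sum.re
        = ((p.roots.map fun r => ((starRingEnd ℂ) c * (z - r)⁻¹).re)).sum := by
      have := AddMonoidHom.map_multiset_sum Complex.reAddGroupHom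
        (p.roots.map fun r => (starRingEnd ℂ) c * (z - r)⁻¹)
      simp only [Multiset.map_map, Function.comp] at this
      exact this
    obtain ⟨a, hamem⟩ := Multiset.exists_mem_of_ne_zero hne
    have hpos : 0 < ((p.roots.map fun r => ((starRingEnd ℂ) c * (z - r)⁻¹).re)).sum := by
      have h1 : ((starRingEnd ℂ) c * (z - a)⁻¹).re
          ≤ ((p.roots.map fun r => ((starRingEnd ℂ) c * (z - r)⁻¹).re)).sum := by
        apply Multiset.single_le_sum
        · intro x hx
          rw [Multiset.mem_map] at hx
          obtain ⟨r, hr, rfl⟩ := hx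
          exact le_of_lt (hterm r hr)
        · exact Multiset.mem_map_of_mem _ hamem
      exact lt_of_lt_of_le (hterm a hamem) h1
    rw [h0, mul_zero, Complex.zero_re] at hre
    rw [hre2] at hre
    exact absurd hre.symm (ne_of_gt hpos)
  rw [hev]
  exact mul_ne_zero hlc (mul_ne_zero hprod hsum)


private lemma iter_good (c : ℂ) (q : Polynomial ℂ) (hq : q ≠ 0)
    (hroots : ∀ r ∈ q.roots, (c * r).re < 0) :
    ∀ k, k ≤ q.natDegree →
      derivative^[k] q ≠ 0 ∧ (derivative^[k] q).natDegree = q.natDegree - k ∧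
        ∀ r ∈ (derivative^[k] q).roots, (c * r).re < 0 := by
  intro k
  induction k with
  | zero => intro _; exact ⟨hq, by simp, hroots⟩
  | succ k ih =>
      intro hk
      obtain ⟨h1, h2, h3⟩ := ih (Nat.le_of_succ_le hk)
      have hdk : (derivative^[k] q).natDegree ≠ 0 := by omega
      have hd0 : 0 < (derivative^[k] q).natDegree := Nat.pos_of_ne_zero hdk
      have hder : derivative (derivative^[k] q) ≠ 0 := by
        intro h0
        exact hdk (natDegree_eq_zero_of_derivative_eq_zero h0)
      have hdeg : (derivative (derivative^[k] q)).natDegree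
          = (derivative^[k] q).natDegree - 1 := by
        have h := degree_derivative_eq (derivative^[k] q) hd0
        exact natDegree_eq_of_degree_eq_some h
      refine ⟨?_, ?_, ?_⟩
      · rw [Function.iterate_succ_apply']; exact hder
      · rw [Function.iterate_succ_apply', hdeg, h2]; omega
      · rw [Function.iterate_succ_apply']
        intro r hr
        by_contra hge
        push_neg at hge
        have hne := deriv_eval_ne_zero (derivative^[k] q) c r h1 hdk h3 hge
        exact hne (mem_roots'.1 hr).2

theorem narayanaA2_stable (n : ℕ) (hn : 1 ≤ n) (x y : ℂ)
    (hx : 0 < x.im) (hy : 0 < y.im) :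
    ∑ k ∈ Finset.Icc 1 n,
        ((n.choose k * n.choose (k - 1) : ℚ) / n : ℚ) * x ^ k * y ^ (n - k + 1) ≠ 0 := by
  have hy0 : y ≠ 0 := by
    intro h; rw [h] at hy; simp at hy
  set w : ℂ := x / y with hw
  have hxw : x = w * y := by rw [hw, div_mul_cancel₀ x hy0]
  have hwnot : ¬(w.im = 0 ∧ w.re ≤ 0) := by
    rintro ⟨him, hre⟩
    have : x.im = w.re * y.im := by
      rw [hxw, Complex.mul_im, him]; ring
    nlinarith
  -- choose the separating direction c
  set c : ℂ := if w.im = 0 then 1 else ⟨1, (w.re - 1) / w.im⟩ with hc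
  have hc1 : 0 < c.re := by
    by_cases h : w.im = 0 <;> simp [hc, h]
  have hcw : 0 < (c * w).re := by
    by_cases h : w.im = 0
    · have : 0 < w.re := by
        rcases lt_or_ge 0 w.re with h' | h'
        · exact h'
        · exact absurd ⟨h, h'⟩ hwnot
      simp only [hc, if_pos h, Complex.mul_re, Complex.one_re, Complex.one_im, h]
      simpa using this
    · have : (c * w).re = 1 := by
        rw [Complex.mul_re]
        simp only [hc, if_neg h]
        field_simp
        ring
      rw [this]; norm_num
  -- the auxiliary polynomial
  set q : Polynomial ℂ := (X + C 1) ^ n * (X + C w) ^ n with hqdef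
  have hq0 : q ≠ 0 :=
    mul_ne_zero (pow_ne_zero _ (monic_X_add_C (1:ℂ)).ne_zero)
      (pow_ne_zero _ (monic_X_add_C w).ne_zero)
  have hqdeg : q.natDegree = 2 * n := by
    rw [hqdef, natDegree_mul (pow_ne_zero _ (monic_X_add_C (1:ℂ)).ne_zero)
      (pow_ne_zero _ (monic_X_add_C w).ne_zero), natDegree_pow, natDegree_pow,
      natDegree_X_add_C, natDegree_X_add_C]
    ring
  have hqroots : ∀ r ∈ q.roots, (c * r).re < 0 := by
    intro r hr
    have hev : q.eval r = 0 := (mem_roots'.1 hr).2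
    rw [hqdef] at hev
    simp only [eval_mul, eval_pow, eval_add, eval_X, eval_C, mul_eq_zero,
      pow_eq_zero_iff (by omega : n ≠ 0)] at hev
    rcases hev with h | h
    · have : r = -1 := by linear_combination h
      rw [this]
      simpa using hc1
    · have : r = -w := by linear_combination h
      rw [this, mul_neg, Complex.neg_re]
      linarith
  -- the (n-1)-st derivative is nonzero at 0
  obtain ⟨hQ0, _, hQroots⟩ := iter_good c q hq0 hqroots (n - 1) (by omega)
  have heval : (derivative^[n - 1] q).eval 0 ≠ 0 := by
    intro h0
    have : (0:ℂ) ∈ (derivative^[n - 1] q).roots := by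
      rw [mem_roots']; exact ⟨hQ0, h0⟩
    have := hQroots 0 this
    simp at this
  -- hence the coefficient of q at n-1 is nonzero
  have hcoeff0 : q.coeff (n - 1) ≠ 0 := by
    intro h0
    apply heval
    rw [← coeff_zero_eq_eval_zero, coeff_iterate_derivative, zero_add, h0, smul_zero]
  -- compute the coefficient
  have hcoeff : q.coeff (n - 1)
      = ∑ k ∈ Finset.Icc 1 n, (n.choose k * n.choose (k - 1) : ℂ) * w ^ k := by
    rw [hqdef, coeff_mul, Finset.Nat.sum_antidiagonal_eq_sum_range_succ_mk]
    rw [show (n - 1).succ = n by omega]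
    refine Finset.sum_nbij' (fun k => k + 1) (fun k => k - 1) ?_ ?_ ?_ ?_ ?_
    · intro a ha
      simp only [Finset.mem_range] at ha
      simp only [Finset.mem_Icc]
      omega
    · intro a ha
      simp only [Finset.mem_Icc] at ha
      simp only [Finset.mem_range]
      omega
    · intro a _
      show a + 1 - 1 = a
      omega
    · intro a ha
      simp only [Finset.mem_Icc] at ha
      show a - 1 + 1 = a
      omega
    · intro i hi
      have hi' : i < n := Finset.mem_range.1 hi
      rw [coeff_X_add_C_pow, coeff_X_add_C_pow]
      have e2 : n - (n - 1 - i) = i + 1 := by omega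
      have e3 : n.choose (n - 1 - i) = n.choose (i + 1) := by
        rw [show n - 1 - i = n - (i + 1) by omega, Nat.choose_symm (by omega)]
      rw [e2, e3]
      simp only [one_pow, one_mul, Nat.add_sub_cancel]
      ring
  have hn0 : (n : ℂ) ≠ 0 := Nat.cast_ne_zero.mpr (by omega)
  have main : (∑ k ∈ Finset.Icc 1 n,
        (((n.choose k * n.choose (k - 1) : ℚ) / n : ℚ) : ℂ) * x ^ k * y ^ (n - k + 1))
      = y ^ (n + 1) * (n : ℂ)⁻¹ * q.coeff (n - 1) := by
    rw [hcoeff, Finset.mul_sum]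
    apply Finset.sum_congr rfl
    intro k hk
    obtain ⟨hk1, hk2⟩ := Finset.mem_Icc.1 hk
    have hxk : x ^ k = w ^ k * y ^ k := by rw [hxw, mul_pow]
    have hyk : y ^ k * y ^ (n - k + 1) = y ^ (n + 1) := by
      rw [← pow_add]; congr 1; omega
    calc (((n.choose k * n.choose (k - 1) : ℚ) / n : ℚ) : ℂ) * x ^ k * y ^ (n - k + 1)
        = ((n.choose k : ℂ) * n.choose (k - 1) * (n : ℂ)⁻¹) * w ^ k
            * (y ^ k * y ^ (n - k + 1)) := by
          rw [hxk]; push_cast; ring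
      _ = y ^ (n + 1) * (n : ℂ)⁻¹ * ((n.choose k * n.choose (k - 1) : ℂ) * w ^ k) := by
          rw [hyk]; ring
  rw [main]
  exact mul_ne_zero (mul_ne_zero (pow_ne_zero _ hy0) (inv_ne_zero hn0)) hcoeff0
end

section
/- For every nonnegative integer n, the polynomial Σ_{k=0}^{n} C(n,k)²·x^k·y^{n-k}, viewed as a polynomial in two complex variables, is stable: it has no zeros (x,y) with both Im(x) > 0 and Im(y) > 0. -/
open Polynomial Finset

noncomputable def NG (n : ℕ) : Polynomial ℝ :=
  ∑ k ∈ range (n + 1), Polynomial.C ((n.choose k : ℝ) ^ 2) * X ^ k * (X + 1) ^ (n - k)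

lemma nat_id (n k : ℕ) (h : k ≤ n) :
    n.choose k * (n.descFactorial (n - k) * n.descFactorial k) = n.factorial * n.choose k ^ 2 := by
  rw [Nat.descFactorial_eq_factorial_mul_choose, Nat.descFactorial_eq_factorial_mul_choose,
    Nat.choose_symm h]
  have := Nat.choose_mul_factorial_mul_factorial h
  nlinarith [this]

lemma deriv_eq' (n : ℕ) :
    derivative^[n] ((X : ℝ[X]) ^ n * (X + 1) ^ n) = Polynomial.C (n.factorial : ℝ) * NG n := by
  rw [Polynomial.iterate_derivative_mul, NG, Finset.mul_sum]
  refine Finset.sum_congr rfl fun k hk => ?_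
  have hkn : k ≤ n := Nat.lt_succ_iff.mp (Finset.mem_range.mp hk)
  have h1 : derivative^[n - k] ((X : ℝ[X]) ^ n) =
      ((n.descFactorial (n - k) : ℕ) : ℝ[X]) * X ^ k := by
    rw [Polynomial.iterate_derivative_X_pow_eq_natCast_mul]
    have h : n - (n - k) = k := by omega
    rw [h]
  have h2 : derivative^[k] ((X + 1 : ℝ[X]) ^ n) =
      ((n.descFactorial k : ℕ) : ℝ[X]) * (X + 1) ^ (n - k) := by
    have := Polynomial.iterate_derivative_X_add_pow n k (1 : ℝ)
    simp only [Polynomial.C_1] at this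
    rw [this, nsmul_eq_mul]
  rw [h1, h2, nsmul_eq_mul]
  have hcast : ((n.choose k * (n.descFactorial (n - k) * n.descFactorial k) : ℕ) : ℝ[X]) =
      ((n.factorial * n.choose k ^ 2 : ℕ) : ℝ[X]) := by rw [nat_id n k hkn]
  push_cast at hcast ⊢
  simp only [map_pow, Polynomial.C_eq_natCast]
  linear_combination hcast * (X ^ k * (X + 1) ^ (n - k))

lemma monic_XI (n k : ℕ) : ((X : ℝ[X]) ^ k * (X + 1) ^ (n - k)).Monic := by
  have h1 : ((X : ℝ[X]) + 1).Monic := by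
    simpa using Polynomial.monic_X_add_C (1 : ℝ)
  exact (Polynomial.monic_X_pow k).mul (h1.pow _)

lemma natDegree_XI (n k : ℕ) (hkn : k ≤ n) :
    ((X : ℝ[X]) ^ k * (X + 1) ^ (n - k)).natDegree = n := by
  have h1 : ((X : ℝ[X]) + 1).Monic := by
    simpa using Polynomial.monic_X_add_C (1 : ℝ)
  rw [(Polynomial.monic_X_pow k).natDegree_mul (h1.pow _), Polynomial.natDegree_X_pow,
    Polynomial.natDegree_pow]
  have : ((X : ℝ[X]) + 1).natDegree = 1 := by
    simpa using Polynomial.natDegree_X_add_C (1 : ℝ)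
  rw [this]
  omega

lemma NG_coeff_n (n : ℕ) : (NG n).coeff n = ∑ k ∈ range (n + 1), (n.choose k : ℝ) ^ 2 := by
  rw [NG, Polynomial.finset_sum_coeff]
  refine Finset.sum_congr rfl fun k hk => ?_
  have hkn : k ≤ n := Nat.lt_succ_iff.mp (Finset.mem_range.mp hk)
  rw [mul_assoc, Polynomial.coeff_C_mul]
  have : ((X : ℝ[X]) ^ k * (X + 1) ^ (n - k)).coeff n = 1 := by
    have := (monic_XI n k).coeff_natDegree
    rwa [natDegree_XI n k hkn] at this
  rw [this, mul_one]

lemma sum_sq_pos (n : ℕ) : 0 < ∑ k ∈ range (n + 1), (n.choose k : ℝ) ^ 2 := by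
  refine Finset.sum_pos' (fun k _ => sq_nonneg _) ⟨0, Finset.mem_range.mpr (Nat.succ_pos n), ?_⟩
  simp

lemma NG_natDegree_le (n : ℕ) : (NG n).natDegree ≤ n := by
  refine (Polynomial.natDegree_sum_le _ _).trans ?_
  rw [Finset.fold_max_le]
  refine ⟨Nat.zero_le n, fun k hk => ?_⟩
  have hkn : k ≤ n := Nat.lt_succ_iff.mp (Finset.mem_range.mp hk)
  simp only [Function.comp]
  rw [mul_assoc]
  exact (Polynomial.natDegree_C_mul_le _ _).trans (natDegree_XI n k hkn).le

lemma NG_natDegree (n : ℕ) : (NG n).natDegree = n := by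
  have hle := NG_natDegree_le n
  have hge : n ≤ (NG n).natDegree := by
    refine Polynomial.le_natDegree_of_ne_zero ?_
    rw [NG_coeff_n]
    exact (sum_sq_pos n).ne'
  omega

lemma NG_ne_zero (n : ℕ) : NG n ≠ 0 := fun h => by
  have := NG_coeff_n n
  rw [h] at this
  simp at this
  exact (sum_sq_pos n).ne this

lemma NG_leadingCoeff_pos (n : ℕ) : 0 < (NG n).leadingCoeff := by
  rw [Polynomial.leadingCoeff, NG_natDegree, NG_coeff_n]
  exact sum_sq_pos n

lemma card_roots_le_iterate (p : ℝ[X]) (m : ℕ) :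
    Multiset.card p.roots ≤ Multiset.card (derivative^[m] p).roots + m := by
  induction m generalizing p with
  | zero => simp
  | succ m ih =>
    calc Multiset.card p.roots ≤ Multiset.card (derivative p).roots + 1 :=
          p.card_roots_le_derivative
      _ ≤ (Multiset.card (derivative^[m] (derivative p)).roots + m) + 1 := by
          exact Nat.add_le_add_right (ih (derivative p)) 1
      _ = Multiset.card (derivative^[m + 1] p).roots + (m + 1) := by
          rw [Function.iterate_succ_apply]; omega

lemma NG_roots_card (n : ℕ) : Multiset.card (NG n).roots = n := by
  have h1 : ((X : ℝ[X]) + 1).Monic := by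
    simpa using Polynomial.monic_X_add_C (1 : ℝ)
  have hP : ((X : ℝ[X]) ^ n * (X + 1) ^ n) ≠ 0 :=
    ((Polynomial.monic_X_pow n).mul (h1.pow n)).ne_zero
  have hXn : ((X : ℝ[X]) ^ n) ≠ 0 := (Polynomial.monic_X_pow n).ne_zero
  have hX1n : (((X : ℝ[X]) + 1) ^ n) ≠ 0 := (h1.pow n).ne_zero
  have hroots1 : ((X : ℝ[X]) + 1).roots = {-1} := by
    simpa [Polynomial.C_neg, sub_neg_eq_add] using Polynomial.roots_X_sub_C (-1 : ℝ)
  have hcardP : Multiset.card ((X : ℝ[X]) ^ n * (X + 1) ^ n).roots = 2 * n := by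
    rw [Polynomial.roots_mul (mul_ne_zero hXn hX1n), Polynomial.roots_pow,
      Polynomial.roots_pow, Polynomial.roots_X, hroots1]
    simp
    omega
  have hle := card_roots_le_iterate ((X : ℝ[X]) ^ n * (X + 1) ^ n) n
  rw [hcardP, deriv_eq' n, Polynomial.roots_C_mul _
    (by exact_mod_cast n.factorial_ne_zero : (n.factorial : ℝ) ≠ 0)] at hle
  have hub : Multiset.card (NG n).roots ≤ n := by
    have := Polynomial.card_roots' (NG n)
    rwa [NG_natDegree] at this
  omega

lemma NG_eval (n : ℕ) (r : ℝ) :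
    (NG n).eval r = ∑ k ∈ range (n + 1), (n.choose k : ℝ) ^ 2 * r ^ k * (r + 1) ^ (n - k) := by
  rw [NG, Polynomial.eval_finset_sum]
  simp

lemma NG_root_mem (n : ℕ) (r : ℝ) (hr : (NG n).eval r = 0) : -1 < r ∧ r < 0 := by
  by_contra hcon
  rw [NG_eval] at hr
  rcases not_and_or.mp hcon with h | h
  · -- r ≤ -1
    have hrle : r ≤ -1 := by linarith [not_lt.mp h]
    have key : ((-1 : ℝ)) ^ n * ∑ k ∈ range (n + 1), (n.choose k : ℝ) ^ 2 * r ^ k * (r + 1) ^ (n - k)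
        = ∑ k ∈ range (n + 1), (n.choose k : ℝ) ^ 2 * (-r) ^ k * (-(r + 1)) ^ (n - k) := by
      rw [Finset.mul_sum]
      refine Finset.sum_congr rfl fun k hk => ?_
      have hkn : k ≤ n := Nat.lt_succ_iff.mp (Finset.mem_range.mp hk)
      have hsign : ((-1 : ℝ)) ^ n = (-1) ^ k * (-1) ^ (n - k) := by
        rw [← pow_add]
        congr 1
        omega
      rw [neg_pow, neg_pow, hsign, show (-(r + 1) : ℝ) = -1 * (r + 1) by ring, mul_pow]
      ring
    have hpos : 0 < ∑ k ∈ range (n + 1), (n.choose k : ℝ) ^ 2 * (-r) ^ k * (-(r + 1)) ^ (n - k) := by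
      refine Finset.sum_pos' (fun k _ => ?_) ⟨n, Finset.mem_range.mpr (Nat.lt_succ_self n), ?_⟩
      · have h1 : (0:ℝ) ≤ -r := by linarith
        have h2 : (0:ℝ) ≤ -(r + 1) := by linarith
        positivity
      · simp only [Nat.choose_self, Nat.cast_one, one_pow, Nat.sub_self, pow_zero, mul_one,
          one_mul]
        have : (1:ℝ) ≤ -r := by linarith
        positivity
    rw [hr, mul_zero] at key
    exact hpos.ne' key.symm
  · -- r ≥ 0
    have hrge : 0 ≤ r := le_of_not_gt h
    have hpos : 0 < ∑ k ∈ range (n + 1), (n.choose k : ℝ) ^ 2 * r ^ k * (r + 1) ^ (n - k) := by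
      refine Finset.sum_pos' (fun k _ => ?_) ⟨0, Finset.mem_range.mpr (Nat.succ_pos n), ?_⟩
      · have h2 : (0:ℝ) ≤ r + 1 := by linarith
        positivity
      · simp only [Nat.choose_zero_right, Nat.cast_one, one_pow, pow_zero, Nat.sub_zero, mul_one,
          one_mul]
        have : (0:ℝ) < r + 1 := by linarith
        positivity
    exact hpos.ne' hr

lemma NG_aeval_eq (n : ℕ) (t : ℂ) :
    Polynomial.aeval t (NG n) =
      ∑ k ∈ range (n + 1), (n.choose k : ℂ) ^ 2 * t ^ k * (t + 1) ^ (n - k) := by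
  rw [NG, map_sum]
  refine Finset.sum_congr rfl fun k hk => ?_
  simp [Complex.coe_algebraMap]

lemma NG_aeval_root (n : ℕ) (t : ℂ) (h : Polynomial.aeval t (NG n) = 0) :
    ∃ r : ℝ, -1 < r ∧ r < 0 ∧ t = (r : ℂ) := by
  have hfac := Polynomial.C_leadingCoeff_mul_prod_multiset_X_sub_C (p := NG n)
    (by rw [NG_roots_card, NG_natDegree])
  have h2 : Polynomial.aeval t
      (Polynomial.C (NG n).leadingCoeff * ((NG n).roots.map fun a => X - Polynomial.C a).prod)
      = 0 := by rw [hfac, h]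
  rw [map_mul, Polynomial.aeval_C, map_multiset_prod, Multiset.map_map] at h2
  rcases mul_eq_zero.mp h2 with h3 | h3
  · exact absurd h3 (by
      simp only [Complex.coe_algebraMap, ne_eq, Complex.ofReal_eq_zero]
      exact (NG_leadingCoeff_pos n).ne')
  · have h4 : (0 : ℂ) ∈ (NG n).roots.map
        ((Polynomial.aeval t : ℝ[X] → ℂ) ∘ fun a => X - Polynomial.C a) :=
      Multiset.prod_eq_zero_iff.mp h3
    obtain ⟨r, hr, hr0⟩ := Multiset.mem_map.mp h4
    have hroot : (NG n).eval r = 0 := by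
      have := Polynomial.isRoot_of_mem_roots hr
      exact this
    obtain ⟨hr1, hr2⟩ := NG_root_mem n r hroot
    refine ⟨r, hr1, hr2, ?_⟩
    have : Polynomial.aeval t (X - Polynomial.C r) = 0 := hr0
    rw [map_sub, Polynomial.aeval_X, Polynomial.aeval_C] at this
    have : t - (r : ℂ) = 0 := by simpa [Complex.coe_algebraMap] using this
    linear_combination this


theorem narayanaB2_stable (n : ℕ) (x y : ℂ) (hx : 0 < x.im) (hy : 0 < y.im) :
    ∑ k ∈ Finset.range (n + 1), ((n.choose k : ℂ) ^ 2) * x ^ k * y ^ (n - k) ≠ 0 := by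
  intro h0
  by_cases hxy : y = x
  · subst hxy
    have hsum : ∑ k ∈ Finset.range (n + 1), ((n.choose k : ℂ) ^ 2) * y ^ k * y ^ (n - k)
        = (((∑ k ∈ Finset.range (n + 1), n.choose k ^ 2 : ℕ) : ℂ)) * y ^ n := by
      push_cast
      rw [Finset.sum_mul]
      refine Finset.sum_congr rfl fun k hk => ?_
      have hkn : k ≤ n := Nat.lt_succ_iff.mp (Finset.mem_range.mp hk)
      rw [mul_assoc, ← pow_add]
      congr 2
      omega
    rw [hsum] at h0
    rcases mul_eq_zero.mp h0 with h | h
    · rw [Nat.cast_eq_zero] at h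
      have : 0 < ∑ k ∈ Finset.range (n + 1), n.choose k ^ 2 :=
        Finset.sum_pos' (fun k _ => Nat.zero_le _)
          ⟨0, Finset.mem_range.mpr (Nat.succ_pos n), by simp⟩
      omega
    · have hy0 : y ≠ 0 := fun hh => by simp [hh] at hy
      exact pow_ne_zero n hy0 h
  · have hyx : y - x ≠ 0 := sub_ne_zero.mpr hxy
    set t : ℂ := x / (y - x) with ht
    have ht1 : t + 1 = y / (y - x) := by
      rw [ht]
      field_simp
      ring
    have key : Polynomial.aeval t (NG n) * (y - x) ^ n
        = ∑ k ∈ Finset.range (n + 1), ((n.choose k : ℂ) ^ 2) * x ^ k * y ^ (n - k) := by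
      rw [NG_aeval_eq, Finset.sum_mul]
      refine Finset.sum_congr rfl fun k hk => ?_
      have hkn : k ≤ n := Nat.lt_succ_iff.mp (Finset.mem_range.mp hk)
      rw [ht1, ht, div_pow, div_pow]
      have hsplit : (y - x) ^ n = (y - x) ^ k * (y - x) ^ (n - k) := by
        rw [← pow_add]
        congr 1
        omega
      rw [hsplit]
      field_simp
    rw [h0] at key
    have haeval : Polynomial.aeval t (NG n) = 0 := by
      rcases mul_eq_zero.mp key with h | h
      · exact h
      · exact absurd h (pow_ne_zero n hyx)
    obtain ⟨r, hr1, hr2, hrt⟩ := NG_aeval_root n t haeval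
    have hxeq : x = (r : ℂ) * (y - x) := by
      rw [← hrt, ht]
      field_simp
    have him : x.im = r * (y.im - x.im) := by
      have := congrArg Complex.im hxeq
      simpa [Complex.mul_im] using this
    nlinarith [mul_pos hx (by linarith : (0:ℝ) < 1 + r), mul_pos (by linarith : (0:ℝ) < -r) hy]
end
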